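/- arXiv:1607.04229 — 5 statements merged into one kernel-verified Lean document; each statement's English description precedes it below -/
import Mathlib

section
/- In the reduction from Min-Weight Triangle to the Viterbi Path problem, the minimum Viterbi cost equals the minimum weight of a triangle in G. Precisely: let G be a complete 3-partite graph on parts V_1, V_2, U with nonnegative edge weights w. Construct the directed graph G' on vertex set {1,2} ∪ V_1 ∪ V_2 with zero-weight edges 1→v for v∈V_1, v→2 for v∈V_2, zero-weight self-loops at 1 and 2, and edges v_1→v_2 of weight w(v_1,v_2) for v_1∈V_1, v_2∈V_2; let A be its adjacency matrix with ∞ for non-edges. Over alphabet U ∪ {⊥, ⊥_F}, define B by B(v,u)=w(v,u) for v∈V_1∪V_2 and u∈U, B(v,⊥)=∞ for v∈V_1∪V_2, B(v,⊥_F)=∞ for v∈V_1∪V_2∪{1}, and B=0 elsewhere. Let S be the sequence obtained by concatenating (u, u, ⊥) for each u∈U followed by ⊥_F. Then min over sequences u_0=1, u_1, ..., u_T ∈ states of Σ_t [A(u_{t-1},u_t)+B(u_t,s_t)] = min over (v_1,v_2,u) ∈ V_1×V_2×U of w(v_1,u)+w(v_1,v_2)+w(v_2,u). -/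
open scoped ENNReal NNReal

/-- States of the HMM in the Min-Weight Triangle reduction:
`Sum.inl false` is node 1 (start), `Sum.inl true` is node 2 (end). -/
abbrev TriState (n n' : ℕ) := Bool ⊕ (Fin n ⊕ Fin n')

/-- Symbols: `Sum.inl u` for `u ∈ U`, `Sum.inr false` is `⊥`, `Sum.inr true` is `⊥_F`. -/
abbrev TriSym (m : ℕ) := Fin m ⊕ Bool

/-- Transition cost matrix of the graph `G'` of the reduction. -/
noncomputable def triA {n n' : ℕ} (w : Fin n → Fin n' → ℝ≥0) :
    TriState n n' → TriState n n' → ℝ≥0∞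
  | Sum.inl false, Sum.inl false => 0                         -- self-loop at node 1
  | Sum.inl false, Sum.inr (Sum.inl _) => 0                   -- 1 → v₁ ∈ V₁
  | Sum.inr (Sum.inl v1), Sum.inr (Sum.inr v2) => (w v1 v2 : ℝ≥0∞)  -- v₁ → v₂
  | Sum.inr (Sum.inr _), Sum.inl true => 0                    -- v₂ → 2
  | Sum.inl true, Sum.inl true => 0                           -- self-loop at node 2
  | _, _ => ⊤

/-- Observation cost matrix of the reduction. -/
noncomputable def triB {n n' m : ℕ}
    (w1 : Fin n → Fin m → ℝ≥0) (w2 : Fin n' → Fin m → ℝ≥0) :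
    TriState n n' → TriSym m → ℝ≥0∞
  | Sum.inr (Sum.inl v1), Sum.inl u => (w1 v1 u : ℝ≥0∞)  -- B(v₁, u) = w(v₁, u)
  | Sum.inr (Sum.inr v2), Sum.inl u => (w2 v2 u : ℝ≥0∞)  -- B(v₂, u) = w(v₂, u)
  | Sum.inr _, Sum.inr _ => ⊤           -- B(v, ⊥) = B(v, ⊥_F) = ∞ for v ∈ V₁ ∪ V₂
  | Sum.inl false, Sum.inr true => ⊤    -- B(1, ⊥_F) = ∞
  | _, _ => 0

/-- The observation sequence: the blocks `(u, u, ⊥)` for each `u ∈ U`, then `⊥_F`. -/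
def triObs (m : ℕ) (t : ℕ) : TriSym m :=
  if h : t < 3 * m then
    (if t % 3 = 2 then Sum.inr false else Sum.inl ⟨t / 3, by omega⟩)
  else Sum.inr true

/-! ### Auxiliary definitions and lemmas -/

/-- The witness path for a triangle `(v₁, v₂)` entering at time `k+1`. -/
def triPath {n n' : ℕ} (v1 : Fin n) (v2 : Fin n') (k t : ℕ) : TriState n n' :=
  if t ≤ k then Sum.inl false else if t = k + 1 then Sum.inr (Sum.inl v1)
  else if t = k + 2 then Sum.inr (Sum.inr v2) else Sum.inl true

lemma triPath_le {n n' : ℕ} (v1 : Fin n) (v2 : Fin n') {k t : ℕ} (h : t ≤ k) :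
    triPath v1 v2 k t = Sum.inl false := by
  unfold triPath; rw [if_pos h]

lemma triPath_eq1 {n n' : ℕ} (v1 : Fin n) (v2 : Fin n') (k : ℕ) :
    triPath v1 v2 k (k + 1) = Sum.inr (Sum.inl v1) := by
  unfold triPath; rw [if_neg (by omega), if_pos rfl]

lemma triPath_eq2 {n n' : ℕ} (v1 : Fin n) (v2 : Fin n') (k : ℕ) :
    triPath v1 v2 k (k + 2) = Sum.inr (Sum.inr v2) := by
  unfold triPath; rw [if_neg (by omega), if_neg (by omega), if_pos rfl]

lemma triPath_ge {n n' : ℕ} (v1 : Fin n) (v2 : Fin n') {k t : ℕ} (h : k + 3 ≤ t) :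
    triPath v1 v2 k t = Sum.inl true := by
  unfold triPath; rw [if_neg (by omega), if_neg (by omega), if_neg (by omega)]

lemma triB_true {n n' m : ℕ} (w1 : Fin n → Fin m → ℝ≥0) (w2 : Fin n' → Fin m → ℝ≥0)
    (s : TriSym m) : triB w1 w2 (Sum.inl true) s = 0 := by
  rcases s with q | b
  · rfl
  · cases b <;> rfl

lemma triB_false {n n' m : ℕ} (w1 : Fin n → Fin m → ℝ≥0) (w2 : Fin n' → Fin m → ℝ≥0)
    {x : ℕ} (h : x < 3 * m) : triB w1 w2 (Sum.inl false) (triObs m x) = 0 := by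
  unfold triObs; rw [dif_pos h]; split_ifs <;> rfl

lemma triObs_eq {m k : ℕ} (h : k < 3 * m) (h2 : k % 3 ≠ 2) :
    triObs m k = Sum.inl ⟨k / 3, by omega⟩ := by
  unfold triObs; rw [dif_pos h, if_neg h2]

lemma triObs_last (m : ℕ) : triObs m (3 * m) = Sum.inr true := by
  unfold triObs; rw [dif_neg (by omega)]

/-- In the reduction from Min-Weight Triangle to Viterbi, the minimum Viterbi cost equals
the minimum weight of a triangle `(v₁, v₂, u) ∈ V₁ × V₂ × U` of `G`. -/
theorem viterbi_reduction_eq_min_triangle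
    (n n' m : ℕ)
    (w : Fin n → Fin n' → ℝ≥0)        -- weights of edges between V₁ and V₂
    (w1 : Fin n → Fin m → ℝ≥0)        -- weights of edges between V₁ and U
    (w2 : Fin n' → Fin m → ℝ≥0) :     -- weights of edges between V₂ and U
    (⨅ (u : ℕ → TriState n n') (_ : u 0 = Sum.inl false),
        ∑ t ∈ Finset.range (3 * m + 1),
          (triA w (u t) (u (t + 1)) + triB w1 w2 (u (t + 1)) (triObs m t)))
      = ⨅ (v1 : Fin n), ⨅ (v2 : Fin n'), ⨅ (uu : Fin m),
          ((w1 v1 uu + w v1 v2 + w2 v2 uu : ℝ≥0) : ℝ≥0∞) := by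
  apply le_antisymm
  · -- LHS ≤ RHS : exhibit a path for each triangle
    refine le_iInf fun v1 => le_iInf fun v2 => le_iInf fun uu => ?_
    have hum : (uu : ℕ) < m := uu.isLt
    set k : ℕ := 3 * (uu : ℕ) with hkdef
    have hp0 : triPath v1 v2 k 0 = Sum.inl false := triPath_le v1 v2 (Nat.zero_le k)
    refine iInf_le_of_le (triPath v1 v2 k) (iInf_le_of_le hp0 (le_of_eq ?_))
    have hobsk : triObs m k = Sum.inl uu := by
      rw [triObs_eq (by omega) (by omega)]
      exact congrArg _ (Fin.ext (by simp only [hkdef]; omega))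
    have hobsk1 : triObs m (k + 1) = Sum.inl uu := by
      rw [triObs_eq (by omega) (by omega)]
      exact congrArg _ (Fin.ext (by simp only [hkdef]; omega))
    have hsub : ({k, k + 1} : Finset ℕ) ⊆ Finset.range (3 * m + 1) := by
      intro x hx
      simp only [Finset.mem_insert, Finset.mem_singleton] at hx
      simp only [Finset.mem_range]
      omega
    rw [← Finset.sum_subset hsub ?_]
    · rw [Finset.sum_pair (show k ≠ k + 1 by omega)]
      rw [triPath_le v1 v2 le_rfl, triPath_eq1, show k + 1 + 1 = k + 2 from rfl,
        triPath_eq2, hobsk, hobsk1]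
      show ((0 : ℝ≥0∞) + (w1 v1 uu : ℝ≥0∞)) + (((w v1 v2 : ℝ≥0∞)) + (w2 v2 uu : ℝ≥0∞))
          = ((w1 v1 uu + w v1 v2 + w2 v2 uu : ℝ≥0) : ℝ≥0∞)
      push_cast
      ring
    · intro x hx hxn
      simp only [Finset.mem_insert, Finset.mem_singleton, not_or] at hxn
      simp only [Finset.mem_range] at hx
      have hx' : x < k ∨ x = k + 2 ∨ k + 3 ≤ x := by omega
      rcases hx' with h | h | h
      · rw [triPath_le v1 v2 (by omega), triPath_le v1 v2 (by omega),
          triB_false w1 w2 (by omega)]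
        show (0 : ℝ≥0∞) + 0 = 0
        simp
      · subst h
        rw [show k + 2 + 1 = k + 3 from rfl, triPath_eq2, triPath_ge v1 v2 le_rfl,
          triB_true]
        show (0 : ℝ≥0∞) + 0 = 0
        simp
      · rw [triPath_ge v1 v2 (by omega), triPath_ge v1 v2 (by omega), triB_true]
        show (0 : ℝ≥0∞) + 0 = 0
        simp
  · -- RHS ≤ LHS : any finite-cost path contains a triangle
    refine le_iInf fun u => le_iInf fun hu0 => ?_
    by_cases htop : ∃ t ∈ Finset.range (3 * m + 1),
        triA w (u t) (u (t + 1)) + triB w1 w2 (u (t + 1)) (triObs m t) = ⊤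
    · rw [ENNReal.sum_eq_top.mpr htop]; exact le_top
    push_neg at htop
    have hfin : ∀ t, t ≤ 3 * m →
        triA w (u t) (u (t + 1)) ≠ ⊤ ∧ triB w1 w2 (u (t + 1)) (triObs m t) ≠ ⊤ := by
      intro t ht
      have h := htop t (Finset.mem_range.mpr (by omega))
      constructor
      · intro ha; exact h (by rw [ha, top_add])
      · intro hb; exact h (by rw [hb, add_top])
    have hlast : u (3 * m + 1) ≠ Sum.inl false := by
      intro h
      have hb := (hfin (3 * m) le_rfl).2
      rw [h, triObs_last] at hb
      exact hb rfl
    have hex : ∃ t, u t ≠ Sum.inl false := ⟨3 * m + 1, hlast⟩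
    obtain ⟨k, hk⟩ : ∃ k, Nat.find hex = k + 1 := by
      have h0 : Nat.find hex ≠ 0 := by
        intro h
        exact (h ▸ Nat.find_spec hex) hu0
      exact ⟨Nat.find hex - 1, by omega⟩
    have hfle : Nat.find hex ≤ 3 * m + 1 := Nat.find_min' hex hlast
    have huk : u k = Sum.inl false := by
      by_contra h
      have := Nat.find_min' hex h
      omega
    have huk1 : u (k + 1) ≠ Sum.inl false := by
      rw [← hk]; exact Nat.find_spec hex
    have hkle : k ≤ 3 * m := by omega
    obtain ⟨v1, hv1⟩ : ∃ v1, u (k + 1) = Sum.inr (Sum.inl v1) := by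
      have hA := (hfin k hkle).1
      rw [huk] at hA
      rcases h1 : u (k + 1) with b | vv
      · cases b
        · exact absurd h1 huk1
        · rw [h1] at hA; exact absurd rfl hA
      · rcases vv with va | vb
        · exact ⟨va, rfl⟩
        · rw [h1] at hA; exact absurd rfl hA
    have hBk := (hfin k hkle).2
    rw [hv1] at hBk
    have hkprop : k < 3 * m ∧ k % 3 ≠ 2 := by
      rcases Nat.lt_or_ge k (3 * m) with h' | h'
      · refine ⟨h', fun h2 => ?_⟩
        rw [show triObs m k = Sum.inr false from by unfold triObs; rw [dif_pos h', if_pos h2]]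
          at hBk
        exact hBk rfl
      · rw [show triObs m k = Sum.inr true from by unfold triObs; rw [dif_neg (by omega)]]
          at hBk
        exact absurd rfl hBk
    obtain ⟨v2, hv2⟩ : ∃ v2, u (k + 1 + 1) = Sum.inr (Sum.inr v2) := by
      have hA := (hfin (k + 1) (by omega)).1
      rw [hv1] at hA
      rcases h1 : u (k + 1 + 1) with b | vv
      · cases b <;> rw [h1] at hA <;> exact absurd rfl hA
      · rcases vv with va | vb
        · rw [h1] at hA; exact absurd rfl hA
        · exact ⟨vb, rfl⟩
    have hBk1 := (hfin (k + 1) (by omega)).2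
    rw [hv2] at hBk1
    have hk1prop : k + 1 < 3 * m ∧ (k + 1) % 3 ≠ 2 := by
      rcases Nat.lt_or_ge (k + 1) (3 * m) with h' | h'
      · refine ⟨h', fun h2 => ?_⟩
        rw [show triObs m (k + 1) = Sum.inr false from by
          unfold triObs; rw [dif_pos h', if_pos h2]] at hBk1
        exact hBk1 rfl
      · rw [show triObs m (k + 1) = Sum.inr true from by
          unfold triObs; rw [dif_neg (by omega)]] at hBk1
        exact absurd rfl hBk1
    have hk0 : k % 3 = 0 := by omega
    have hqlt : k / 3 < m := by omega
    set q : Fin m := ⟨k / 3, hqlt⟩ with hq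
    have hobsk : triObs m k = Sum.inl q := triObs_eq hkprop.1 hkprop.2
    have hobsk1 : triObs m (k + 1) = Sum.inl q := by
      rw [triObs_eq hk1prop.1 hk1prop.2]
      exact congrArg _ (Fin.ext (by simp only [hq]; omega))
    calc (⨅ (a : Fin n), ⨅ (b : Fin n'), ⨅ (c : Fin m),
            ((w1 a c + w a b + w2 b c : ℝ≥0) : ℝ≥0∞))
        ≤ ((w1 v1 q + w v1 v2 + w2 v2 q : ℝ≥0) : ℝ≥0∞) :=
          iInf_le_of_le v1 (iInf_le_of_le v2 (iInf_le _ q))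
      _ = (triA w (u k) (u (k + 1)) + triB w1 w2 (u (k + 1)) (triObs m k))
            + (triA w (u (k + 1)) (u (k + 1 + 1))
              + triB w1 w2 (u (k + 1 + 1)) (triObs m (k + 1))) := by
          rw [huk, hv1, hv2, hobsk, hobsk1]
          show ((w1 v1 q + w v1 v2 + w2 v2 q : ℝ≥0) : ℝ≥0∞)
            = ((0 : ℝ≥0∞) + (w1 v1 q : ℝ≥0∞)) + ((w v1 v2 : ℝ≥0∞) + (w2 v2 q : ℝ≥0∞))
          push_cast
          ring
      _ ≤ ∑ t ∈ ({k, k + 1} : Finset ℕ),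
            (triA w (u t) (u (t + 1)) + triB w1 w2 (u (t + 1)) (triObs m t)) := by
          rw [Finset.sum_pair (show k ≠ k + 1 by omega)]
      _ ≤ ∑ t ∈ Finset.range (3 * m + 1),
            (triA w (u t) (u (t + 1)) + triB w1 w2 (u (t + 1)) (triObs m t)) := by
          refine Finset.sum_le_sum_of_subset ?_
          intro x hx
          simp only [Finset.mem_insert, Finset.mem_singleton] at hx
          simp only [Finset.mem_range]
          omega
end

section
/- In the graph G' of the Min-Weight Triangle reduction, any finite-cost Viterbi path must have the following structure: it stays at node 1 for some prefix (using the self-loop), then during the three consecutive observations (u, u, ⊥) for a single u ∈ U moves 1 → v_1 → v_2 → 2 with v_1 ∈ V_1 and v_2 ∈ V_2, and then stays at node 2 until the end; moreover its total cost is w(v_1,u) + w(v_1,v_2) + w(v_2,u). -/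
/-!
The only finite-cost edges of `G'` are `1 → 1`, `1 → V₁`, `V₁ → V₂`, `V₂ → 2` and `2 → 2`; the
observation costs forbid being in `V₁ ∪ V₂` while reading `⊥` or `⊥_F`, and being at node `1`
while reading `⊥_F`. Hence a finite-cost path leaves node `1` at some time `t₀ < 3|U|`, is then
forced through `V₁` and `V₂` into node `2`, and stays there. Neither of the two moves into `V₁`
and `V₂` may read a `⊥`, so `t₀` is the start of a block `(u, u, ⊥)`. Every other step costs `0`.
-/

open scoped ENNReal NNReal

section Transitions

variable {n n' : ℕ} (w : Fin n → Fin n' → ℝ≥0) {s : TriState n n'}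

theorem triA_start_ne_top (h : triA w (.inl false) s ≠ ⊤) :
    s = .inl false ∨ ∃ v1, s = .inr (.inl v1) := by
  rcases s with (_ | _) | (_ | _) <;> simp_all [triA]

theorem triA_left_ne_top {v1 : Fin n} (h : triA w (.inr (.inl v1)) s ≠ ⊤) :
    ∃ v2, s = .inr (.inr v2) := by
  rcases s with (_ | _) | (_ | _) <;> simp_all [triA]

theorem triA_right_ne_top {v2 : Fin n'} (h : triA w (.inr (.inr v2)) s ≠ ⊤) :
    s = .inl true := by
  rcases s with (_ | _) | (_ | _) <;> simp_all [triA]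

theorem triA_end_ne_top (h : triA w (.inl true) s ≠ ⊤) : s = .inl true := by
  rcases s with (_ | _) | (_ | _) <;> simp_all [triA]

end Transitions

section Observations

variable {n n' m : ℕ} (w1 : Fin n → Fin m → ℝ≥0) (w2 : Fin n' → Fin m → ℝ≥0)

theorem triObs_of_le {t : ℕ} (h : 3 * m ≤ t) : triObs m t = .inr true := by
  simp [triObs, not_lt.2 h]

theorem triObs_three_mul (k : Fin m) : triObs m (3 * k) = .inl k := by
  simp [triObs, k.isLt]

theorem triObs_three_mul_add_one (k : Fin m) : triObs m (3 * k + 1) = .inl k := by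
  have hlt : 3 * (k : ℕ) + 1 < 3 * m := by omega
  simp only [triObs, hlt, dite_true]
  rw [if_neg (by omega)]
  congr
  omega

theorem triB_end (s : TriSym m) : triB w1 w2 (.inl true) s = 0 := by
  rcases s with _ | (_ | _) <;> rfl

theorem triB_start_triObs {t : ℕ} (h : t < 3 * m) : triB w1 w2 (.inl false) (triObs m t) = 0 := by
  unfold triObs
  split_ifs <;> rfl

theorem triB_start_triObs_three_mul :
    triB w1 w2 (.inl false) (triObs m (3 * m)) = ⊤ := by
  rw [triObs_of_le le_rfl]; rfl

theorem lt_and_mod_ne_two_of_triB_ne_top {x : Fin n ⊕ Fin n'} {t : ℕ}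
    (h : triB w1 w2 (.inr x) (triObs m t) ≠ ⊤) : t < 3 * m ∧ t % 3 ≠ 2 := by
  unfold triObs at h
  split_ifs at h with hlt hmod
  · rcases x with _ | _ <;> exact absurd rfl h
  · exact ⟨hlt, hmod⟩
  · rcases x with _ | _ <;> exact absurd rfl h

end Observations

section Paths

variable {n n' m : ℕ} (w : Fin n → Fin n' → ℝ≥0) (w1 : Fin n → Fin m → ℝ≥0)
  (w2 : Fin n' → Fin m → ℝ≥0) (u : ℕ → TriState n n')

noncomputable def triStepCost (t : ℕ) : ℝ≥0∞ :=
  triA w (u t) (u (t + 1)) + triB w1 w2 (u (t + 1)) (triObs m t)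

variable {w w1 w2 u}

theorem eq_end_of_triStepCost_ne_top {s : ℕ}
    (hstep : ∀ t ≤ 3 * m, triStepCost w w1 w2 u t ≠ ⊤) (hs : u s = .inl true) :
    ∀ t, s ≤ t → t ≤ 3 * m + 1 → u t = .inl true := by
  intro t hst
  induction t, hst using Nat.le_induction with
  | base => exact fun _ => hs
  | succ t _ ih =>
    intro ht
    have hA := (ENNReal.add_ne_top.1 (hstep t (by omega))).1
    rw [ih (by omega)] at hA
    exact triA_end_ne_top w hA

theorem exists_exit_from_start (hstep : ∀ t ≤ 3 * m, triStepCost w w1 w2 u t ≠ ⊤)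
    (hu0 : u 0 = .inl false) :
    ∃ t₀ ≤ 3 * m, (∀ t ≤ t₀, u t = .inl false) ∧ u (t₀ + 1) ≠ .inl false := by
  have hlast : u (3 * m + 1) ≠ .inl false := fun hstay => hstep (3 * m) le_rfl <| by
    rw [triStepCost, hstay, triB_start_triObs_three_mul, add_top]
  have hleaves : ∃ t, u (t + 1) ≠ .inl false := ⟨3 * m, hlast⟩
  refine ⟨Nat.find hleaves, Nat.find_min' hleaves hlast, ?_, Nat.find_spec hleaves⟩
  rintro (_ | t) ht
  · exact hu0
  · exact not_not.1 (Nat.find_min hleaves ht)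

theorem exists_triangle_of_triStepCost_ne_top
    (hstep : ∀ t ≤ 3 * m, triStepCost w w1 w2 u t ≠ ⊤) (hu0 : u 0 = .inl false) :
    ∃ (k : Fin m) (v1 : Fin n) (v2 : Fin n'),
      (∀ t ≤ 3 * (k : ℕ), u t = .inl false) ∧
      u (3 * (k : ℕ) + 1) = .inr (.inl v1) ∧
      u (3 * (k : ℕ) + 2) = .inr (.inr v2) ∧
      (∀ t, 3 * (k : ℕ) + 3 ≤ t → t ≤ 3 * m + 1 → u t = .inl true) := by
  obtain ⟨t₀, ht₀, hpre, hleave⟩ := exists_exit_from_start hstep hu0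
  obtain ⟨hA₀, hB₀⟩ := ENNReal.add_ne_top.1 (hstep t₀ ht₀)
  rw [hpre t₀ le_rfl] at hA₀
  obtain ⟨v1, h1⟩ := (triA_start_ne_top w hA₀).resolve_left hleave
  rw [h1] at hB₀
  obtain ⟨hlt₀, hmod₀⟩ := lt_and_mod_ne_two_of_triB_ne_top w1 w2 hB₀
  obtain ⟨hA₁, hB₁⟩ := ENNReal.add_ne_top.1 (hstep (t₀ + 1) (by omega))
  rw [h1] at hA₁
  obtain ⟨v2, h2⟩ := triA_left_ne_top w hA₁
  rw [h2] at hB₁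
  obtain ⟨hlt₁, hmod₁⟩ := lt_and_mod_ne_two_of_triB_ne_top w1 w2 hB₁
  have hA₂ := (ENNReal.add_ne_top.1 (hstep (t₀ + 2) (by omega))).1
  rw [h2] at hA₂
  have h3 := triA_right_ne_top w hA₂
  obtain ⟨k, rfl⟩ : ∃ k, t₀ = 3 * k := ⟨t₀ / 3, by omega⟩
  exact ⟨⟨k, by omega⟩, v1, v2, hpre, h1, h2, eq_end_of_triStepCost_ne_top hstep h3⟩

theorem sum_triStepCost_eq (k : Fin m) (v1 : Fin n) (v2 : Fin n')
    (hpre : ∀ t ≤ 3 * (k : ℕ), u t = .inl false)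
    (h1 : u (3 * (k : ℕ) + 1) = .inr (.inl v1)) (h2 : u (3 * (k : ℕ) + 2) = .inr (.inr v2))
    (hend : ∀ t, 3 * (k : ℕ) + 3 ≤ t → t ≤ 3 * m + 1 → u t = .inl true) :
    ∑ t ∈ Finset.range (3 * m + 1), triStepCost w w1 w2 u t =
      ((w1 v1 k + w v1 v2 + w2 v2 k : ℝ≥0) : ℝ≥0∞) := by
  have hk := k.isLt
  rw [Finset.sum_eq_add_of_mem (3 * (k : ℕ)) (3 * (k : ℕ) + 1)
    (Finset.mem_range.2 (by omega)) (Finset.mem_range.2 (by omega)) (by omega)]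
  · simp [triStepCost, hpre _ le_rfl, h1, h2, triObs_three_mul, triObs_three_mul_add_one, triA,
      triB, add_assoc]
  · rintro t ht ⟨hne₀, hne₁⟩
    rw [Finset.mem_range] at ht
    rw [triStepCost]
    rcases Nat.lt_or_gt_of_ne hne₀ with hlt | hgt
    · rw [hpre t hlt.le, hpre (t + 1) hlt, triB_start_triObs w1 w2 (by omega)]
      simp [triA]
    · rw [hend (t + 1) (by omega) (by omega), triB_end]
      obtain rfl | hge : t = 3 * k + 2 ∨ 3 * k + 3 ≤ t := by omega
      · simp [h2, triA]
      · simp [hend t hge (by omega), triA]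

end Paths

/-- Structure of finite-cost Viterbi paths in the Min-Weight Triangle reduction: any
finite-cost path stays at node 1, moves `1 → v₁ → v₂ → 2` during the block `(u, u, ⊥)`
of a single `u ∈ U`, stays at node 2 until the end, and its total cost is
`w(v₁,u) + w(v₁,v₂) + w(v₂,u)`. -/
theorem viterbi_reduction_path_structure
    (n n' m : ℕ)
    (w : Fin n → Fin n' → ℝ≥0)
    (w1 : Fin n → Fin m → ℝ≥0)
    (w2 : Fin n' → Fin m → ℝ≥0)
    (u : ℕ → TriState n n')
    (hu0 : u 0 = Sum.inl false)
    (hfin : (∑ t ∈ Finset.range (3 * m + 1),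
        (triA w (u t) (u (t + 1)) + triB w1 w2 (u (t + 1)) (triObs m t))) < ⊤) :
    ∃ (uu : Fin m) (v1 : Fin n) (v2 : Fin n'),
      (∀ t ≤ 3 * (uu : ℕ), u t = Sum.inl false) ∧
      u (3 * (uu : ℕ) + 1) = Sum.inr (Sum.inl v1) ∧
      u (3 * (uu : ℕ) + 2) = Sum.inr (Sum.inr v2) ∧
      (∀ t, 3 * (uu : ℕ) + 3 ≤ t → t ≤ 3 * m + 1 → u t = Sum.inl true) ∧
      (∑ t ∈ Finset.range (3 * m + 1),
          (triA w (u t) (u (t + 1)) + triB w1 w2 (u (t + 1)) (triObs m t)))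
        = ((w1 v1 uu + w v1 v2 + w2 v2 uu : ℝ≥0) : ℝ≥0∞) := by
  have hstep : ∀ t ≤ 3 * m, triStepCost w w1 w2 u t ≠ ⊤ := fun t ht =>
    (ENNReal.sum_lt_top.1 hfin t (Finset.mem_range.2 (by omega))).ne
  obtain ⟨k, v1, v2, hpre, h1, h2, hend⟩ := exists_triangle_of_triStepCost_ne_top hstep hu0
  exact ⟨k, v1, v2, hpre, h1, h2, hend, sum_triStepCost_eq k v1 v2 hpre h1 h2 hend⟩
end

section
/- In the Min-Weight k-Clique to Viterbi reduction (k = p+2), the minimum Viterbi cost equals the minimum total edge-weight of a k-clique in the complete k-partite graph G on parts V_1, V_2, U_1, ..., U_p. In particular, for every choice of v_1 ∈ V_1, v_2 ∈ V_2 and (u_1,...,u_p) ∈ U_1 × ... × U_p, there exists a state sequence of cost exactly Σ_{i} w(v_1,u_i) + w(v_1,v_2) + Σ_{i} w(v_2,u_i) + Σ_{i<j} w(u_i,u_j), and every finite-cost state sequence has cost equal to the weight of some such k-clique. -/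
open scoped ENNReal

/-- Hidden states of the Min-Weight k-Clique reduction (k = p + 2). -/
inductive KState (n p Z : ℕ) where
  | start                           -- node 1
  | a (v : Fin n) (i : Fin p)       -- nodes a_{v,1},...,a_{v,p} for v ∈ V₁
  | v1 (v : Fin n)                  -- V₁
  | v2 (v : Fin n)                  -- V₂
  | b (v : Fin n) (j : Fin p)       -- nodes b_{v,1},...,b_{v,p} for v ∈ V₂
  | two                             -- node 2
  | c (i : Fin Z)                   -- nodes c_1,...,c_Z
  | three                           -- node 3
  deriving DecidableEq

/-- Observation symbols: `obs i u` is the symbol `u ∈ U_i`, plus `⊥₀, ⊥₁, ⊥, ⊥_F`. -/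
inductive KSym (p m : ℕ) where
  | obs (i : Fin p) (u : Fin m)
  | bot0
  | bot1
  | bot
  | botF
  deriving DecidableEq

/-- Transition cost matrix of the state graph of the reduction. -/
noncomputable def kA {n p Z : ℕ} (w11 : Fin n → Fin n → ℕ) :
    KState n p Z → KState n p Z → ℝ≥0∞
  | .start, .start => 0
  | .start, .a _ i => if (i : ℕ) = 0 then 0 else ⊤
  | .a v i, .a v' i' => if v = v' ∧ (i' : ℕ) = (i : ℕ) + 1 then 0 else ⊤
  | .a v i, .v1 v' => if v = v' ∧ (i : ℕ) = p - 1 then 0 else ⊤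
  | .v1 x, .v2 y => (w11 x y : ℝ≥0∞)
  | .v2 v, .b v' j => if v = v' ∧ (j : ℕ) = 0 then 0 else ⊤
  | .b v j, .b v' j' => if v = v' ∧ (j' : ℕ) = (j : ℕ) + 1 then 0 else ⊤
  | .b _ j, .two => if (j : ℕ) = p - 1 then 0 else ⊤
  | .two, .c i => if (i : ℕ) = 0 then 0 else ⊤
  | .c i, .c i' => if (i' : ℕ) = (i : ℕ) + 1 then 0 else ⊤
  | .c i, .three => if (i : ℕ) = Z - 1 then 0 else ⊤
  | .three, .three => 0
  | _, _ => ⊤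

/-- Observation cost matrix of the reduction. -/
noncomputable def kB {n p Z m : ℕ} (wa wb : Fin n → Fin p → Fin m → ℕ) :
    KState n p Z → KSym p m → ℝ≥0∞
  | .start, .bot => 0
  | .three, .bot => 0
  | _, .bot => ⊤                    -- B(v, ⊥) = ∞ for v ∉ {1, 3}
  | .three, .botF => 0
  | _, .botF => ⊤                   -- B(v, ⊥_F) = ∞ for v ≠ 3
  | .a v i, .obs i' u => if i' = i then (wa v i u : ℝ≥0∞) else 0
  | .b v j, .obs j' u => if j' = j then (wb v j u : ℝ≥0∞) else 0
  | .c i, .bot1 => ((2 ^ (i : ℕ) : ℕ) : ℝ≥0∞)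
  | _, _ => 0

/-- Total weight of the edges among a tuple `(u_1,...,u_p) ∈ U_1 × ... × U_p`. -/
def kSmallW {p m : ℕ} (wu : Fin p → Fin m → Fin p → Fin m → ℕ)
    (f : Fin p → Fin m) : ℕ :=
  ∑ i : Fin p, ∑ j : Fin p, if i < j then wu i (f i) j (f j) else 0

/-- Total weight of the k-clique `(x, y, u_1, ..., u_p)` with `x ∈ V₁`, `y ∈ V₂`. -/
def kCliqueW {n p m : ℕ} (w11 : Fin n → Fin n → ℕ)
    (wa wb : Fin n → Fin p → Fin m → ℕ)
    (wu : Fin p → Fin m → Fin p → Fin m → ℕ)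
    (x y : Fin n) (f : Fin p → Fin m) : ℕ :=
  (∑ i : Fin p, wa x i (f i)) + w11 x y + (∑ i : Fin p, wb y i (f i)) + kSmallW wu f

/-- The block of `Z + 2p + 4` observations associated to the tuple `f = (u_1,...,u_p)`:
`(u_1,...,u_p, ⊥₀, ⊥₀, u_1,...,u_p, ⊥₀)`, then the `Z`-symbol binary encoding
(LSB first) of the weight of the clique `(u_1,...,u_p)`, then `⊥`. -/
def kBlock {p m : ℕ} (Z : ℕ) (wu : Fin p → Fin m → Fin p → Fin m → ℕ)
    (f : Fin p → Fin m) (r : ℕ) : KSym p m :=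
  if h : r < p then .obs ⟨r, h⟩ (f ⟨r, h⟩)
  else if h1 : r = p ∨ r = p + 1 then .bot0
  else if h : r < 2 * p + 2 then .obs ⟨r - p - 2, by omega⟩ (f ⟨r - p - 2, by omega⟩)
  else if r = 2 * p + 2 then .bot0
  else if r < 2 * p + 3 + Z then
    (if (kSmallW wu f).testBit (r - (2 * p + 3)) then .bot1 else .bot0)
  else .bot

/-- The full observation sequence: the concatenation of the blocks over all tuples
(enumerated by the bijection `e`), followed by a single `⊥_F`. -/
def kObs {p m : ℕ} (Z : ℕ) (wu : Fin p → Fin m → Fin p → Fin m → ℕ)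
    (e : Fin (m ^ p) ≃ (Fin p → Fin m)) (t : ℕ) : KSym p m :=
  if h : t < m ^ p * (Z + 2 * p + 4) then
    kBlock Z wu (e ⟨t / (Z + 2 * p + 4), Nat.div_lt_of_lt_mul (Nat.mul_comm (m ^ p) (Z + 2 * p + 4) ▸ h)⟩)
      (t % (Z + 2 * p + 4))
  else .botF

/-- Cost of a state sequence in the Viterbi instance of the reduction
(`T = m^p (Z + 2k) + 1` with `k = p + 2`). -/
noncomputable def kCost {n p Z m : ℕ} (w11 : Fin n → Fin n → ℕ)
    (wa wb : Fin n → Fin p → Fin m → ℕ)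
    (wu : Fin p → Fin m → Fin p → Fin m → ℕ)
    (e : Fin (m ^ p) ≃ (Fin p → Fin m)) (u : ℕ → KState n p Z) : ℝ≥0∞ :=
  ∑ t ∈ Finset.range (m ^ p * (Z + 2 * p + 4) + 1),
    (kA w11 (u t) (u (t + 1)) + kB wa wb (u (t + 1)) (kObs Z wu e t))
section
variable {n p Z m : ℕ}

lemma kB_three (wa wb : Fin n → Fin p → Fin m → ℕ) (s : KSym p m) :
    kB (Z := Z) wa wb .three s = 0 := by cases s <;> rfl

lemma kB_start (wa wb : Fin n → Fin p → Fin m → ℕ) (s : KSym p m) (h : s ≠ .botF) :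
    kB (Z := Z) wa wb .start s = 0 := by cases s <;> first | rfl | exact absurd rfl h

lemma kA_start_inv (w11 : Fin n → Fin n → ℕ) (τ : KState n p Z)
    (h : kA w11 .start τ ≠ ⊤) : τ = .start ∨ ∃ x i, τ = .a x i ∧ (i : ℕ) = 0 := by
  cases τ <;> simp_all [kA] <;> tauto

lemma kA_to_start_inv (w11 : Fin n → Fin n → ℕ) (σ : KState n p Z)
    (h : kA w11 σ .start ≠ ⊤) : σ = .start := by
  cases σ <;> simp_all [kA]

lemma kA_three_inv (w11 : Fin n → Fin n → ℕ) (τ : KState n p Z)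
    (h : kA w11 .three τ ≠ ⊤) : τ = .three := by
  cases τ <;> simp_all [kA]

lemma kB_bot_inv (wa wb : Fin n → Fin p → Fin m → ℕ) (σ : KState n p Z)
    (h : kB wa wb σ .bot ≠ ⊤) : σ = .start ∨ σ = .three := by
  cases σ <;> simp_all [kB]

lemma kB_botF_inv (wa wb : Fin n → Fin p → Fin m → ℕ) (σ : KState n p Z)
    (h : kB wa wb σ .botF ≠ ⊤) : σ = .three := by
  cases σ <;> simp_all [kB]

lemma kA_a_inv (w11 : Fin n → Fin n → ℕ) (x : Fin n) (i : Fin p) (τ : KState n p Z)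
    (h : kA w11 (.a x i) τ ≠ ⊤) :
    (∃ i' : Fin p, τ = .a x i' ∧ (i' : ℕ) = i + 1) ∨ ((i : ℕ) = p - 1 ∧ τ = .v1 x) := by
  cases τ <;> simp_all [kA] <;> tauto

lemma kA_v1_inv (w11 : Fin n → Fin n → ℕ) (x : Fin n) (τ : KState n p Z)
    (h : kA w11 (.v1 x) τ ≠ ⊤) : ∃ y, τ = .v2 y := by
  cases τ <;> simp_all [kA]

lemma kA_v2_inv (w11 : Fin n → Fin n → ℕ) (y : Fin n) (τ : KState n p Z)
    (h : kA w11 (.v2 y) τ ≠ ⊤) : ∃ j : Fin p, τ = .b y j ∧ (j : ℕ) = 0 := by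
  cases τ <;> simp_all [kA] <;> tauto

lemma kA_b_inv (w11 : Fin n → Fin n → ℕ) (y : Fin n) (j : Fin p) (τ : KState n p Z)
    (h : kA w11 (.b y j) τ ≠ ⊤) :
    (∃ j' : Fin p, τ = .b y j' ∧ (j' : ℕ) = j + 1) ∨ ((j : ℕ) = p - 1 ∧ τ = .two) := by
  cases τ <;> simp_all [kA] <;> tauto

lemma kA_two_inv (w11 : Fin n → Fin n → ℕ) (τ : KState n p Z)
    (h : kA w11 .two τ ≠ ⊤) : ∃ i : Fin Z, τ = .c i ∧ (i : ℕ) = 0 := by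
  cases τ <;> simp_all [kA] <;> tauto

lemma kA_c_inv (w11 : Fin n → Fin n → ℕ) (i : Fin Z) (τ : KState n p Z)
    (h : kA w11 (.c i) τ ≠ ⊤) :
    (∃ i' : Fin Z, τ = .c i' ∧ (i' : ℕ) = i + 1) ∨ ((i : ℕ) = Z - 1 ∧ τ = .three) := by
  cases τ <;> simp_all [kA] <;> tauto

end
section
variable {n p Z m : ℕ}

/-- canonical chain states -/
def kSeg (p Z : ℕ) {n : ℕ} (x y : Fin n) (r : ℕ) : KState n p Z :=
  if _h0 : r = 0 then .start
  else if h : r < p + 1 then .a x ⟨r - 1, by omega⟩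
  else if _h : r = p + 1 then .v1 x
  else if _h : r = p + 2 then .v2 y
  else if h : r < 2 * p + 3 then .b y ⟨r - p - 3, by omega⟩
  else if _h : r = 2 * p + 3 then .two
  else if h : r < 2 * p + 4 + Z then .c ⟨r - (2 * p + 4), by omega⟩
  else .three

lemma kSeg_zero (x y : Fin n) : kSeg p Z x y 0 = .start := rfl

lemma kSeg_a (x y : Fin n) (r : ℕ) (h0 : r ≠ 0) (h : r < p + 1) (h' : r - 1 < p) :
    kSeg p Z x y r = .a x ⟨r - 1, h'⟩ := by
  unfold kSeg; rw [dif_neg h0, dif_pos h]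

lemma kSeg_v1 (x y : Fin n) : kSeg p Z x y (p + 1) = .v1 x := by
  unfold kSeg; rw [dif_neg (by omega), dif_neg (by omega), dif_pos rfl]

lemma kSeg_v2 (x y : Fin n) : kSeg p Z x y (p + 2) = .v2 y := by
  unfold kSeg
  rw [dif_neg (by omega), dif_neg (by omega), dif_neg (by omega), dif_pos rfl]

lemma kSeg_b (x y : Fin n) (r : ℕ) (h1 : p + 3 ≤ r) (h : r < 2 * p + 3)
    (h' : r - p - 3 < p) : kSeg p Z x y r = .b y ⟨r - p - 3, h'⟩ := by
  unfold kSeg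
  rw [dif_neg (by omega), dif_neg (by omega), dif_neg (by omega), dif_neg (by omega),
    dif_pos h]

lemma kSeg_two (x y : Fin n) : kSeg p Z x y (2 * p + 3) = .two := by
  unfold kSeg
  rw [dif_neg (by omega), dif_neg (by omega), dif_neg (by omega), dif_neg (by omega),
    dif_neg (by omega), dif_pos rfl]

lemma kSeg_c (x y : Fin n) (r : ℕ) (h1 : 2 * p + 4 ≤ r) (h : r < 2 * p + 4 + Z)
    (h' : r - (2 * p + 4) < Z) : kSeg p Z x y r = .c ⟨r - (2 * p + 4), h'⟩ := by
  unfold kSeg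
  rw [dif_neg (by omega), dif_neg (by omega), dif_neg (by omega), dif_neg (by omega),
    dif_neg (by omega), dif_neg (by omega), dif_pos h]

lemma kSeg_three (x y : Fin n) (r : ℕ) (h : 2 * p + 4 + Z ≤ r) :
    kSeg p Z x y r = .three := by
  unfold kSeg
  rw [dif_neg (by omega), dif_neg (by omega), dif_neg (by omega), dif_neg (by omega),
    dif_neg (by omega), dif_neg (by omega), dif_neg (by omega)]

variable (wu : Fin p → Fin m → Fin p → Fin m → ℕ) (f : Fin p → Fin m)

lemma kBlock_obs1 (r : ℕ) (h : r < p) :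
    kBlock Z wu f r = .obs ⟨r, h⟩ (f ⟨r, h⟩) := by
  unfold kBlock; rw [dif_pos h]

lemma kBlock_bot0₁₂ (r : ℕ) (h : r = p ∨ r = p + 1) : kBlock Z wu f r = .bot0 := by
  unfold kBlock; rw [dif_neg (by omega), dif_pos h]

lemma kBlock_obs2 (r : ℕ) (h1 : p + 2 ≤ r) (h2 : r < 2 * p + 2) (h' : r - p - 2 < p) :
    kBlock Z wu f r = .obs ⟨r - p - 2, h'⟩ (f ⟨r - p - 2, h'⟩) := by
  unfold kBlock; rw [dif_neg (by omega), dif_neg (by omega), dif_pos h2]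

lemma kBlock_bot0₃ : kBlock Z wu f (2 * p + 2) = .bot0 := by
  unfold kBlock
  rw [dif_neg (by omega), dif_neg (by omega), dif_neg (by omega), if_pos rfl]

lemma kBlock_bit (r : ℕ) (h1 : 2 * p + 3 ≤ r) (h2 : r < 2 * p + 3 + Z) :
    kBlock Z wu f r =
      (if (kSmallW wu f).testBit (r - (2 * p + 3)) then .bot1 else .bot0) := by
  unfold kBlock
  rw [dif_neg (by omega), dif_neg (by omega), dif_neg (by omega), if_neg (by omega),
    if_pos h2]

lemma kBlock_bot (r : ℕ) (h : 2 * p + 3 + Z ≤ r) : kBlock Z wu f r = .bot := by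
  unfold kBlock
  rw [dif_neg (by omega), dif_neg (by omega), dif_neg (by omega), if_neg (by omega),
    if_neg (by omega)]

lemma kBlock_ne_botF (r : ℕ) : kBlock Z wu f r ≠ .botF := by
  unfold kBlock; split_ifs <;> simp

end
section
variable {n p Z m : ℕ}
variable (wu : Fin p → Fin m → Fin p → Fin m → ℕ) (e : Fin (m ^ p) ≃ (Fin p → Fin m))

lemma kObs_eq (j r : ℕ) (hj : j < m ^ p) (hr : r < Z + 2 * p + 4) :
    kObs Z wu e (j * (Z + 2 * p + 4) + r) = kBlock Z wu (e ⟨j, hj⟩) r := by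
  have hL : 0 < Z + 2 * p + 4 := by omega
  have ht : j * (Z + 2 * p + 4) + r < m ^ p * (Z + 2 * p + 4) := by
    calc j * (Z + 2 * p + 4) + r < (j + 1) * (Z + 2 * p + 4) := by ring_nf; omega
    _ ≤ m ^ p * (Z + 2 * p + 4) := Nat.mul_le_mul_right _ hj
  have hdiv : (j * (Z + 2 * p + 4) + r) / (Z + 2 * p + 4) = j := by
    rw [mul_comm, Nat.mul_add_div hL, Nat.div_eq_of_lt hr, Nat.add_zero]
  have hmod : (j * (Z + 2 * p + 4) + r) % (Z + 2 * p + 4) = r := by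
    rw [mul_comm, Nat.mul_add_mod, Nat.mod_eq_of_lt hr]
  unfold kObs
  rw [dif_pos ht]
  rw [hmod]
  congr 1
  exact congrArg e (Fin.ext hdiv)

lemma kObs_ne_botF (t : ℕ) (ht : t < m ^ p * (Z + 2 * p + 4)) :
    kObs Z wu e t ≠ .botF := by
  unfold kObs; rw [dif_pos ht]; apply kBlock_ne_botF

lemma kObs_botF (t : ℕ) (ht : m ^ p * (Z + 2 * p + 4) ≤ t) :
    kObs Z wu e t = .botF := by
  unfold kObs; rw [dif_neg (by omega)]

lemma bits_sum : ∀ (Z v : ℕ), v < 2 ^ Z →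
    ∑ i ∈ Finset.range Z, (if v.testBit i then 2 ^ i else 0) = v := by
  intro Z
  induction Z with
  | zero => intro v hv; interval_cases v; simp
  | succ Z ih =>
    intro v hv
    have hpow : (2:ℕ) ^ (Z + 1) = 2 ^ Z * 2 := pow_succ 2 Z
    have h2 : v / 2 < 2 ^ Z := by omega
    have key := ih (v / 2) h2
    rw [Finset.sum_range_succ']
    have hstep : ∀ i, (if v.testBit (i + 1) then 2 ^ (i + 1) else 0)
        = 2 * (if (v / 2).testBit i then 2 ^ i else 0) := by
      intro i
      rw [Nat.testBit_succ]
      by_cases hb : (v / 2).testBit i <;> simp [hb] <;> ring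
    rw [Finset.sum_congr rfl fun i _ => hstep i, ← Finset.mul_sum, key]
    by_cases hb : v % 2 = 1 <;> simp [Nat.testBit_zero, hb] <;> omega
end
section
variable {n p Z m : ℕ} (w11 : Fin n → Fin n → ℕ) (wa wb : Fin n → Fin p → Fin m → ℕ)

lemma kA_start_start : kA (p := p) (Z := Z) w11 .start .start = 0 := rfl
lemma kA_start_a (x : Fin n) (i : Fin p) (h : (i : ℕ) = 0) :
    kA (Z := Z) w11 .start (.a x i) = 0 := by simp [kA, h]
lemma kA_aa (x : Fin n) (i i' : Fin p) (h : (i' : ℕ) = (i : ℕ) + 1) :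
    kA (Z := Z) w11 (.a x i) (.a x i') = 0 := by simp [kA, h]
lemma kA_a_v1 (x : Fin n) (i : Fin p) (h : (i : ℕ) = p - 1) :
    kA (Z := Z) w11 (.a x i) (.v1 x) = 0 := by simp [kA, h]
lemma kA_v1_v2 (x y : Fin n) :
    kA (p := p) (Z := Z) w11 (.v1 x) (.v2 y) = (w11 x y : ℝ≥0∞) := rfl
lemma kA_v2_b (y : Fin n) (j : Fin p) (h : (j : ℕ) = 0) :
    kA (Z := Z) w11 (.v2 y) (.b y j) = 0 := by simp [kA, h]
lemma kA_bb (y : Fin n) (j j' : Fin p) (h : (j' : ℕ) = (j : ℕ) + 1) :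
    kA (Z := Z) w11 (.b y j) (.b y j') = 0 := by simp [kA, h]
lemma kA_b_two (y : Fin n) (j : Fin p) (h : (j : ℕ) = p - 1) :
    kA (Z := Z) w11 (.b y j) .two = 0 := by simp [kA, h]
lemma kA_two_c (i : Fin Z) (h : (i : ℕ) = 0) :
    kA (p := p) w11 .two (.c i) = 0 := by simp [kA, h]
lemma kA_cc (i i' : Fin Z) (h : (i' : ℕ) = (i : ℕ) + 1) :
    kA (p := p) w11 (.c i) (.c i') = 0 := by simp [kA, h]
lemma kA_c_three (i : Fin Z) (h : (i : ℕ) = Z - 1) :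
    kA (p := p) w11 (.c i) .three = 0 := by simp [kA, h]
lemma kA_three_three : kA (p := p) (Z := Z) w11 .three .three = 0 := rfl

lemma kB_a_obs (x : Fin n) (i i' : Fin p) (u' : Fin m) (h : i' = i) :
    kB (Z := Z) wa wb (.a x i) (.obs i' u') = (wa x i u' : ℝ≥0∞) := by simp [kB, h]
lemma kB_b_obs (y : Fin n) (j j' : Fin p) (u' : Fin m) (h : j' = j) :
    kB (Z := Z) wa wb (.b y j) (.obs j' u') = (wb y j u' : ℝ≥0∞) := by simp [kB, h]
lemma kB_c_bot1 (i : Fin Z) :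
    kB (p := p) wa wb (.c i) .bot1 = ((2 ^ (i : ℕ) : ℕ) : ℝ≥0∞) := rfl
lemma kB_c_bot0 (i : Fin Z) : kB (p := p) wa wb (.c i) .bot0 = 0 := rfl
lemma kB_a_bot0 (x : Fin n) (i : Fin p) : kB (Z := Z) wa wb (.a x i) .bot0 = 0 := rfl
lemma kB_v1_bot0 (x : Fin n) : kB (p := p) (Z := Z) wa wb (.v1 x) .bot0 = 0 := rfl
lemma kB_v2_bot0 (y : Fin n) : kB (p := p) (Z := Z) wa wb (.v2 y) .bot0 = 0 := rfl
lemma kB_two_bot0 : kB (n := n) (p := p) (Z := Z) (m := m) wa wb .two .bot0 = 0 := rfl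
end
section
variable {n p Z m : ℕ} (w11 : Fin n → Fin n → ℕ) (wa wb : Fin n → Fin p → Fin m → ℕ)
  (wu : Fin p → Fin m → Fin p → Fin m → ℕ)

lemma kSeg_a' (x y : Fin n) (r i : ℕ) (hi : i < p) (hr : r = i + 1) :
    kSeg p Z x y r = .a x ⟨i, hi⟩ := by
  subst hr
  rw [kSeg_a x y (i + 1) (by omega) (by omega) (by omega)]
  simp

lemma kSeg_b' (x y : Fin n) (r j : ℕ) (hj : j < p) (hr : r = p + 3 + j) :
    kSeg p Z x y r = .b y ⟨j, hj⟩ := by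
  subst hr
  rw [kSeg_b x y (p + 3 + j) (by omega) (by omega) (by omega)]
  exact congrArg _ (Fin.ext (show p + 3 + j - p - 3 = j by omega))

lemma kSeg_c' (x y : Fin n) (r i : ℕ) (hi : i < Z) (hr : r = 2 * p + 4 + i) :
    kSeg p Z x y r = .c ⟨i, hi⟩ := by
  subst hr
  rw [kSeg_c x y (2 * p + 4 + i) (by omega) (by omega) (by omega)]
  simp

variable (f' : Fin p → Fin m) (x y : Fin n)

lemma kW1 (r : ℕ) (h : r < p) :
    kA w11 (kSeg p Z x y r) (kSeg p Z x y (r + 1))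
      + kB wa wb (kSeg p Z x y (r + 1)) (kBlock Z wu f' r)
    = ((wa x ⟨r, h⟩ (f' ⟨r, h⟩) : ℕ) : ℝ≥0∞) := by
  rw [kBlock_obs1 wu f' r h, kSeg_a' x y (r + 1) r h rfl, kB_a_obs _ _ x _ _ _ rfl]
  rcases Nat.eq_zero_or_pos r with h0 | h0
  · subst h0; rw [kSeg_zero, kA_start_a _ x _ rfl, zero_add]
  · rw [kSeg_a' x y r (r - 1) (by omega) (by omega), kA_aa _ x _ _ (show r = r - 1 + 1 by omega),
      zero_add]

lemma kW2 (hp : 0 < p) :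
    kA w11 (kSeg p Z x y p) (kSeg p Z x y (p + 1))
      + kB wa wb (kSeg p Z x y (p + 1)) (kBlock Z wu f' p) = 0 := by
  rw [kSeg_a' x y p (p - 1) (by omega) (by omega), kSeg_v1,
    kA_a_v1 _ x _ rfl, kBlock_bot0₁₂ wu f' p (Or.inl rfl), kB_v1_bot0, add_zero]

lemma kW3 :
    kA w11 (kSeg p Z x y (p + 1)) (kSeg p Z x y (p + 1 + 1))
      + kB wa wb (kSeg p Z x y (p + 1 + 1)) (kBlock Z wu f' (p + 1))
    = ((w11 x y : ℕ) : ℝ≥0∞) := by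
  rw [kSeg_v1, show p + 1 + 1 = p + 2 from rfl, kSeg_v2, kA_v1_v2,
    kBlock_bot0₁₂ wu f' (p + 1) (Or.inr rfl), kB_v2_bot0, add_zero]

lemma kW4 (r : ℕ) (h1 : p + 2 ≤ r) (h2 : r < 2 * p + 2) (h' : r - p - 2 < p) :
    kA w11 (kSeg p Z x y r) (kSeg p Z x y (r + 1))
      + kB wa wb (kSeg p Z x y (r + 1)) (kBlock Z wu f' r)
    = ((wb y ⟨r - p - 2, h'⟩ (f' ⟨r - p - 2, h'⟩) : ℕ) : ℝ≥0∞) := by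
  rw [kBlock_obs2 wu f' r h1 h2 h', kSeg_b' x y (r + 1) (r - p - 2) h' (by omega),
    kB_b_obs _ _ y _ _ _ rfl]
  rcases Nat.lt_or_ge r (p + 3) with h0 | h0
  · have : r = p + 2 := by omega
    subst this
    rw [kSeg_v2, kA_v2_b _ y _ (show p + 2 - p - 2 = 0 by omega), zero_add]
  · rw [kSeg_b' x y r (r - p - 3) (by omega) (by omega),
      kA_bb _ y _ _ (show r - p - 2 = r - p - 3 + 1 by omega), zero_add]

lemma kW5 (hp : 0 < p) :
    kA w11 (kSeg p Z x y (2 * p + 2)) (kSeg p Z x y (2 * p + 2 + 1))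
      + kB wa wb (kSeg p Z x y (2 * p + 2 + 1)) (kBlock Z wu f' (2 * p + 2)) = 0 := by
  rw [kSeg_b' x y (2 * p + 2) (p - 1) (by omega) (by omega),
    show 2 * p + 2 + 1 = 2 * p + 3 from rfl, kSeg_two,
    kA_b_two _ y _ rfl, kBlock_bot0₃, kB_two_bot0, add_zero]

lemma kW6 (r : ℕ) (h1 : 2 * p + 3 ≤ r) (h2 : r < 2 * p + 3 + Z) :
    kA w11 (kSeg p Z x y r) (kSeg p Z x y (r + 1))
      + kB wa wb (kSeg p Z x y (r + 1)) (kBlock Z wu f' r)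
    = ((if (kSmallW wu f').testBit (r - (2 * p + 3)) then 2 ^ (r - (2 * p + 3)) else 0 : ℕ)
        : ℝ≥0∞) := by
  rw [kBlock_bit wu f' r h1 h2, apply_ite (kB wa wb (kSeg p Z x y (r + 1))),
    kSeg_c' x y (r + 1) (r - (2 * p + 3)) (by omega) (by omega), kB_c_bot1, kB_c_bot0]
  rcases Nat.lt_or_ge r (2 * p + 4) with h0 | h0
  · have : r = 2 * p + 3 := by omega
    subst this
    rw [kSeg_two, kA_two_c _ _ (show 2 * p + 3 - (2 * p + 3) = 0 by omega), zero_add]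
    by_cases hb : (kSmallW wu f').testBit (2 * p + 3 - (2 * p + 3)) <;> simp [hb]
  · rw [kSeg_c' x y r (r - (2 * p + 4)) (by omega) (by omega),
      kA_cc _ _ _ (show r - (2 * p + 3) = r - (2 * p + 4) + 1 by omega), zero_add]
    by_cases hb : (kSmallW wu f').testBit (r - (2 * p + 3)) <;> simp [hb]

lemma kW7 (hZ : 0 < Z) :
    kA w11 (kSeg p Z x y (2 * p + 3 + Z)) (kSeg p Z x y (2 * p + 3 + Z + 1))
      + kB wa wb (kSeg p Z x y (2 * p + 3 + Z + 1)) (kBlock Z wu f' (2 * p + 3 + Z))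
    = 0 := by
  rw [kSeg_c' x y (2 * p + 3 + Z) (Z - 1) (by omega) (by omega),
    kSeg_three x y _ (by omega), kA_c_three _ _ rfl,
    kBlock_bot wu f' _ le_rfl, kB_three, add_zero]
end
section
variable {n p Z m : ℕ}

lemma cost_eval (hp : 0 < p) (hZ : 0 < Z)
    (w11 : Fin n → Fin n → ℕ) (wa wb : Fin n → Fin p → Fin m → ℕ)
    (wu : Fin p → Fin m → Fin p → Fin m → ℕ) (e : Fin (m ^ p) ≃ (Fin p → Fin m))
    (x y : Fin n) (j : ℕ) (hj : j < m ^ p)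
    (hsw : kSmallW wu (e ⟨j, hj⟩) < 2 ^ Z)
    (u : ℕ → KState n p Z)
    (h1 : ∀ t, t ≤ j * (Z + 2 * p + 4) → u t = .start)
    (h2 : ∀ r, r ≤ Z + 2 * p + 4 → u (j * (Z + 2 * p + 4) + r) = kSeg p Z x y r)
    (h3 : ∀ t, j * (Z + 2 * p + 4) + (Z + 2 * p + 4) ≤ t →
        t ≤ m ^ p * (Z + 2 * p + 4) + 1 → u t = .three) :
    kCost w11 wa wb wu e u
      = ((kCliqueW w11 wa wb wu x y (e ⟨j, hj⟩) : ℕ) : ℝ≥0∞) := by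
  have hjL : j * (Z + 2 * p + 4) + (Z + 2 * p + 4) ≤ m ^ p * (Z + 2 * p + 4) := by
    calc j * (Z + 2 * p + 4) + (Z + 2 * p + 4) = (j + 1) * (Z + 2 * p + 4) := by ring
      _ ≤ m ^ p * (Z + 2 * p + 4) := Nat.mul_le_mul_right _ hj
  have hsub : Finset.Ico (j * (Z + 2 * p + 4)) (j * (Z + 2 * p + 4) + (Z + 2 * p + 4))
      ⊆ Finset.range (m ^ p * (Z + 2 * p + 4) + 1) := by
    intro t ht
    simp only [Finset.mem_Ico, Finset.mem_range] at *
    omega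
  have hzero : ∀ t ∈ Finset.range (m ^ p * (Z + 2 * p + 4) + 1),
      t ∉ Finset.Ico (j * (Z + 2 * p + 4)) (j * (Z + 2 * p + 4) + (Z + 2 * p + 4)) →
      kA w11 (u t) (u (t + 1)) + kB wa wb (u (t + 1)) (kObs Z wu e t) = 0 := by
    intro t ht hnot
    simp only [Finset.mem_range] at ht
    have hcase : t < j * (Z + 2 * p + 4) ∨ j * (Z + 2 * p + 4) + (Z + 2 * p + 4) ≤ t := by
      simp only [Finset.mem_Ico] at hnot; omega
    rcases hcase with hlt | hge
    · rw [h1 t (by omega), h1 (t + 1) (by omega), kA_start_start,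
        kB_start _ _ _ (kObs_ne_botF wu e t (by omega)), add_zero]
    · rw [h3 t (by omega) (by omega), h3 (t + 1) (by omega) (by omega),
        kA_three_three, kB_three, add_zero]
  unfold kCost
  rw [← Finset.sum_subset hsub hzero, Finset.sum_Ico_eq_sum_range,
    Nat.add_sub_cancel_left]
  have hrw : ∀ r ∈ Finset.range (Z + 2 * p + 4),
      kA w11 (u (j * (Z + 2 * p + 4) + r)) (u (j * (Z + 2 * p + 4) + r + 1))
        + kB wa wb (u (j * (Z + 2 * p + 4) + r + 1)) (kObs Z wu e (j * (Z + 2 * p + 4) + r))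
      = kA w11 (kSeg p Z x y r) (kSeg p Z x y (r + 1))
        + kB wa wb (kSeg p Z x y (r + 1)) (kBlock Z wu (e ⟨j, hj⟩) r) := by
    intro r hr
    simp only [Finset.mem_range] at hr
    rw [h2 r (by omega),
      show j * (Z + 2 * p + 4) + r + 1 = j * (Z + 2 * p + 4) + (r + 1) by ring,
      h2 (r + 1) (by omega), kObs_eq wu e j r hj hr]
  rw [Finset.sum_congr rfl hrw]
  rw [Finset.range_eq_Ico,
    ← Finset.sum_Ico_consecutive _ (show 0 ≤ p by omega) (show p ≤ Z + 2 * p + 4 by omega),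
    ← Finset.sum_Ico_consecutive _ (show p ≤ p + 1 by omega)
        (show p + 1 ≤ Z + 2 * p + 4 by omega),
    ← Finset.sum_Ico_consecutive _ (show p + 1 ≤ p + 2 by omega)
        (show p + 2 ≤ Z + 2 * p + 4 by omega),
    ← Finset.sum_Ico_consecutive _ (show p + 2 ≤ 2 * p + 2 by omega)
        (show 2 * p + 2 ≤ Z + 2 * p + 4 by omega),
    ← Finset.sum_Ico_consecutive _ (show 2 * p + 2 ≤ 2 * p + 3 by omega)
        (show 2 * p + 3 ≤ Z + 2 * p + 4 by omega),
    ← Finset.sum_Ico_consecutive _ (show 2 * p + 3 ≤ 2 * p + 3 + Z by omega)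
        (show 2 * p + 3 + Z ≤ Z + 2 * p + 4 by omega)]
  have hA1 : (∑ r ∈ Finset.Ico 0 p,
      (kA w11 (kSeg p Z x y r) (kSeg p Z x y (r + 1))
        + kB wa wb (kSeg p Z x y (r + 1)) (kBlock Z wu (e ⟨j, hj⟩) r)))
      = ((∑ i : Fin p, wa x i (e ⟨j, hj⟩ i) : ℕ) : ℝ≥0∞) := by
    rw [← Finset.range_eq_Ico]
    calc ∑ r ∈ Finset.range p,
        (kA w11 (kSeg p Z x y r) (kSeg p Z x y (r + 1))
          + kB wa wb (kSeg p Z x y (r + 1)) (kBlock Z wu (e ⟨j, hj⟩) r))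
        = ∑ r ∈ Finset.range p, (fun r =>
            if h : r < p then ((wa x ⟨r, h⟩ (e ⟨j, hj⟩ ⟨r, h⟩) : ℕ) : ℝ≥0∞) else 0) r := by
          refine Finset.sum_congr rfl fun r hr => ?_
          rw [Finset.mem_range] at hr
          rw [kW1 w11 wa wb wu (e ⟨j, hj⟩) x y r hr]
          simp [hr]
      _ = ∑ i : Fin p, (fun r =>
            if h : r < p then ((wa x ⟨r, h⟩ (e ⟨j, hj⟩ ⟨r, h⟩) : ℕ) : ℝ≥0∞) else 0) ↑i :=
          (Fin.sum_univ_eq_sum_range _ p).symm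
      _ = ∑ i : Fin p, ((wa x i (e ⟨j, hj⟩ i) : ℕ) : ℝ≥0∞) := by
          refine Finset.sum_congr rfl fun i _ => ?_
          simp [i.isLt]
      _ = ((∑ i : Fin p, wa x i (e ⟨j, hj⟩ i) : ℕ) : ℝ≥0∞) := (Nat.cast_sum _ _).symm
  have hB1 : (∑ r ∈ Finset.Ico p (p + 1),
      (kA w11 (kSeg p Z x y r) (kSeg p Z x y (r + 1))
        + kB wa wb (kSeg p Z x y (r + 1)) (kBlock Z wu (e ⟨j, hj⟩) r))) = 0 := by
    rw [Nat.Ico_succ_singleton, Finset.sum_singleton, kW2 w11 wa wb wu (e ⟨j, hj⟩) x y hp]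
  have hB2 : (∑ r ∈ Finset.Ico (p + 1) (p + 2),
      (kA w11 (kSeg p Z x y r) (kSeg p Z x y (r + 1))
        + kB wa wb (kSeg p Z x y (r + 1)) (kBlock Z wu (e ⟨j, hj⟩) r)))
      = ((w11 x y : ℕ) : ℝ≥0∞) := by
    rw [show Finset.Ico (p + 1) (p + 2) = {p + 1} from Nat.Ico_succ_singleton (p + 1),
      Finset.sum_singleton, kW3 w11 wa wb wu (e ⟨j, hj⟩) x y]
  have hA2 : (∑ r ∈ Finset.Ico (p + 2) (2 * p + 2),
      (kA w11 (kSeg p Z x y r) (kSeg p Z x y (r + 1))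
        + kB wa wb (kSeg p Z x y (r + 1)) (kBlock Z wu (e ⟨j, hj⟩) r)))
      = ((∑ i : Fin p, wb y i (e ⟨j, hj⟩ i) : ℕ) : ℝ≥0∞) := by
    rw [Finset.sum_Ico_eq_sum_range, show 2 * p + 2 - (p + 2) = p by omega]
    calc ∑ i ∈ Finset.range p,
        (kA w11 (kSeg p Z x y (p + 2 + i)) (kSeg p Z x y (p + 2 + i + 1))
          + kB wa wb (kSeg p Z x y (p + 2 + i + 1)) (kBlock Z wu (e ⟨j, hj⟩) (p + 2 + i)))
        = ∑ i ∈ Finset.range p, (fun i =>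
            if h : i < p then ((wb y ⟨i, h⟩ (e ⟨j, hj⟩ ⟨i, h⟩) : ℕ) : ℝ≥0∞) else 0) i := by
          refine Finset.sum_congr rfl fun i hi => ?_
          rw [Finset.mem_range] at hi
          rw [kW4 w11 wa wb wu (e ⟨j, hj⟩) x y (p + 2 + i) (by omega) (by omega) (by omega)]
          simp [hi, show p + 2 + i - p - 2 = i from by omega]
      _ = ∑ i : Fin p, (fun i =>
            if h : i < p then ((wb y ⟨i, h⟩ (e ⟨j, hj⟩ ⟨i, h⟩) : ℕ) : ℝ≥0∞) else 0) ↑i :=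
          (Fin.sum_univ_eq_sum_range _ p).symm
      _ = ∑ i : Fin p, ((wb y i (e ⟨j, hj⟩ i) : ℕ) : ℝ≥0∞) := by
          refine Finset.sum_congr rfl fun i _ => ?_
          simp [i.isLt]
      _ = ((∑ i : Fin p, wb y i (e ⟨j, hj⟩ i) : ℕ) : ℝ≥0∞) := (Nat.cast_sum _ _).symm
  have hB3 : (∑ r ∈ Finset.Ico (2 * p + 2) (2 * p + 3),
      (kA w11 (kSeg p Z x y r) (kSeg p Z x y (r + 1))
        + kB wa wb (kSeg p Z x y (r + 1)) (kBlock Z wu (e ⟨j, hj⟩) r))) = 0 := by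
    rw [show Finset.Ico (2 * p + 2) (2 * p + 3) = {2 * p + 2} from
        Nat.Ico_succ_singleton (2 * p + 2),
      Finset.sum_singleton, kW5 w11 wa wb wu (e ⟨j, hj⟩) x y hp]
  have hA3 : (∑ r ∈ Finset.Ico (2 * p + 3) (2 * p + 3 + Z),
      (kA w11 (kSeg p Z x y r) (kSeg p Z x y (r + 1))
        + kB wa wb (kSeg p Z x y (r + 1)) (kBlock Z wu (e ⟨j, hj⟩) r)))
      = ((kSmallW wu (e ⟨j, hj⟩) : ℕ) : ℝ≥0∞) := by
    rw [Finset.sum_Ico_eq_sum_range, Nat.add_sub_cancel_left]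
    calc ∑ i ∈ Finset.range Z,
        (kA w11 (kSeg p Z x y (2 * p + 3 + i)) (kSeg p Z x y (2 * p + 3 + i + 1))
          + kB wa wb (kSeg p Z x y (2 * p + 3 + i + 1)) (kBlock Z wu (e ⟨j, hj⟩) (2 * p + 3 + i)))
        = ∑ i ∈ Finset.range Z,
            (((if (kSmallW wu (e ⟨j, hj⟩)).testBit i then 2 ^ i else 0 : ℕ)) : ℝ≥0∞) := by
          refine Finset.sum_congr rfl fun i hi => ?_
          rw [Finset.mem_range] at hi
          rw [kW6 w11 wa wb wu (e ⟨j, hj⟩) x y (2 * p + 3 + i) (by omega) (by omega),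
            show 2 * p + 3 + i - (2 * p + 3) = i by omega]
      _ = ((∑ i ∈ Finset.range Z,
            (if (kSmallW wu (e ⟨j, hj⟩)).testBit i then 2 ^ i else 0) : ℕ) : ℝ≥0∞) :=
          (Nat.cast_sum _ _).symm
      _ = ((kSmallW wu (e ⟨j, hj⟩) : ℕ) : ℝ≥0∞) := by rw [bits_sum Z _ hsw]
  have hB4 : (∑ r ∈ Finset.Ico (2 * p + 3 + Z) (Z + 2 * p + 4),
      (kA w11 (kSeg p Z x y r) (kSeg p Z x y (r + 1))
        + kB wa wb (kSeg p Z x y (r + 1)) (kBlock Z wu (e ⟨j, hj⟩) r))) = 0 := by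
    rw [show Z + 2 * p + 4 = 2 * p + 3 + Z + 1 by omega, Nat.Ico_succ_singleton,
      Finset.sum_singleton, kW7 w11 wa wb wu (e ⟨j, hj⟩) x y hZ]
  rw [hA1, hB1, hB2, hA2, hB3, hA3, hB4]
  simp only [kCliqueW]
  push_cast
  ring
end
section
variable {n p Z m : ℕ}

def kPhase (p Z : ℕ) {n : ℕ} : KState n p Z → ℕ
  | .start => 0
  | .a _ i => (i : ℕ) + 1
  | .v1 _ => p + 1
  | .v2 _ => p + 2
  | .b _ j => p + 3 + (j : ℕ)
  | .two => 2 * p + 3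
  | .c i => 2 * p + 4 + (i : ℕ)
  | .three => 2 * p + 4 + Z

lemma kPhase_step (w11 : Fin n → Fin n → ℕ) (σ τ : KState n p Z)
    (h : kA w11 σ τ ≠ ⊤) (h0 : σ ≠ .start) (h3 : σ ≠ .three) :
    kPhase p Z τ = kPhase p Z σ + 1 := by
  cases σ <;> cases τ <;> simp_all [kA, kPhase] <;>
    first
      | omega
      | (rename_i i _; have := i.isLt; omega)
      | (rename_i i _ _; have := i.isLt; omega)

lemma kPhase_start : kPhase p Z (.start : KState n p Z) = 0 := rfl
lemma kPhase_three : kPhase p Z (.three : KState n p Z) = 2 * p + 4 + Z := rfl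
lemma kPhase_eq_zero (σ : KState n p Z) (h : kPhase p Z σ = 0) : σ = .start := by
  cases σ <;> simp_all [kPhase]
lemma kPhase_lt (σ : KState n p Z) (h : kPhase p Z σ < 2 * p + 4 + Z) : σ ≠ .three := by
  cases σ <;> simp_all [kPhase]

lemma chain_exists (hp : 0 < p) (hZ : 0 < Z) (w11 : Fin n → Fin n → ℕ)
    (u : ℕ → KState n p Z) (s : ℕ)
    (hfin : ∀ r, r < Z + 2 * p + 4 → kA w11 (u (s + r)) (u (s + r + 1)) ≠ ⊤)
    (h0 : u s = .start) (h1 : u (s + 1) ≠ .start) :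
    ∃ x y, ∀ r, r ≤ Z + 2 * p + 4 → u (s + r) = kSeg p Z x y r := by
  have haux : ∀ r, r < Z + 2 * p + 4 → kA w11 (u (s + r)) (u (s + (r + 1))) ≠ ⊤ :=
    fun r hr => hfin r hr
  have hf0 := haux 0 (by omega)
  rw [show s + 0 = s from rfl, h0] at hf0
  rcases kA_start_inv w11 _ hf0 with hst | ⟨x, i0, hx, hi0⟩
  · exact absurd hst h1
  refine ⟨x, ?_⟩
  have ha : ∀ i (hi : i < p), u (s + (i + 1)) = .a x ⟨i, hi⟩ := by
    intro i
    induction i with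
    | zero =>
      intro hi
      rw [hx]
      exact congrArg _ (Fin.ext (show (i0 : ℕ) = 0 from hi0))
    | succ i ih =>
      intro hi
      have hprev := ih (by omega)
      have hf := haux (i + 1) (by omega)
      rw [hprev] at hf
      rcases kA_a_inv w11 x _ _ hf with ⟨i', hi', hval⟩ | ⟨hv, _⟩
      · rw [hi']
        exact congrArg _ (Fin.ext (show (i' : ℕ) = i + 1 from hval))
      · exfalso
        have hveq : i = p - 1 := hv
        omega
  have hap : u (s + p) = .a x ⟨p - 1, by omega⟩ := by
    have h' := ha (p - 1) (by omega)
    rwa [show p - 1 + 1 = p by omega] at h'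
  have hv1 : u (s + (p + 1)) = .v1 x := by
    have hf := haux p (by omega)
    rw [hap] at hf
    rcases kA_a_inv w11 x _ _ hf with ⟨i', hi', hval⟩ | ⟨_, h⟩
    · exfalso
      have hv' : (i' : ℕ) = p - 1 + 1 := hval
      have := i'.isLt
      omega
    · exact h
  have hf := haux (p + 1) (by omega)
  rw [hv1] at hf
  obtain ⟨y, hv2⟩ := kA_v1_inv w11 x _ hf
  rw [show p + 1 + 1 = p + 2 from rfl] at hv2
  refine ⟨y, ?_⟩
  have hb0 : ∃ j0 : Fin p, u (s + (p + 3)) = .b y j0 ∧ (j0 : ℕ) = 0 := by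
    have hf := haux (p + 2) (by omega)
    rw [hv2] at hf
    obtain ⟨j0, hj0, hj0v⟩ := kA_v2_inv w11 y _ hf
    exact ⟨j0, hj0, hj0v⟩
  have hb : ∀ j (hj : j < p), u (s + (p + 3 + j)) = .b y ⟨j, hj⟩ := by
    intro j
    induction j with
    | zero =>
      intro hj
      obtain ⟨j0, hj0, hj0v⟩ := hb0
      rw [show p + 3 + 0 = p + 3 from rfl, hj0]
      exact congrArg _ (Fin.ext (show (j0 : ℕ) = 0 from hj0v))
    | succ j ih =>
      intro hj
      have hprev := ih (by omega)
      have hf := haux (p + 3 + j) (by omega)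
      rw [hprev, show p + 3 + j + 1 = p + 3 + (j + 1) from rfl] at hf
      rcases kA_b_inv w11 y _ _ hf with ⟨j', hj', hval⟩ | ⟨hv, _⟩
      · rw [hj']
        exact congrArg _ (Fin.ext (show (j' : ℕ) = j + 1 from hval))
      · exfalso
        have hveq : j = p - 1 := hv
        omega
  have hbp : u (s + (2 * p + 2)) = .b y ⟨p - 1, by omega⟩ := by
    have h' := hb (p - 1) (by omega)
    rwa [show p + 3 + (p - 1) = 2 * p + 2 by omega] at h'
  have htwo : u (s + (2 * p + 3)) = .two := by
    have hf := haux (2 * p + 2) (by omega)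
    rw [hbp] at hf
    rcases kA_b_inv w11 y _ _ hf with ⟨j', hj', hval⟩ | ⟨_, h⟩
    · exfalso
      have hv' : (j' : ℕ) = p - 1 + 1 := hval
      have := j'.isLt
      omega
    · exact h
  have hc0 : ∃ i0 : Fin Z, u (s + (2 * p + 4)) = .c i0 ∧ (i0 : ℕ) = 0 := by
    have hf := haux (2 * p + 3) (by omega)
    rw [htwo] at hf
    obtain ⟨i0, hi0, hi0v⟩ := kA_two_inv w11 _ hf
    exact ⟨i0, hi0, hi0v⟩
  have hc : ∀ i (hi : i < Z), u (s + (2 * p + 4 + i)) = .c ⟨i, hi⟩ := by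
    intro i
    induction i with
    | zero =>
      intro hi
      obtain ⟨i0, hi0, hi0v⟩ := hc0
      rw [show 2 * p + 4 + 0 = 2 * p + 4 from rfl, hi0]
      exact congrArg _ (Fin.ext (show (i0 : ℕ) = 0 from hi0v))
    | succ i ih =>
      intro hi
      have hprev := ih (by omega)
      have hf := haux (2 * p + 4 + i) (by omega)
      rw [hprev, show 2 * p + 4 + i + 1 = 2 * p + 4 + (i + 1) from rfl] at hf
      rcases kA_c_inv w11 _ _ hf with ⟨i', hi', hval⟩ | ⟨hv, _⟩
      · rw [hi']
        exact congrArg _ (Fin.ext (show (i' : ℕ) = i + 1 from hval))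
      · exfalso
        have hveq : i = Z - 1 := hv
        omega
  have hcZ : u (s + (2 * p + 3 + Z)) = .c ⟨Z - 1, by omega⟩ := by
    have h' := hc (Z - 1) (by omega)
    rwa [show 2 * p + 4 + (Z - 1) = 2 * p + 3 + Z by omega] at h'
  have hthree : u (s + (2 * p + 4 + Z)) = .three := by
    have hf := haux (2 * p + 3 + Z) (by omega)
    rw [hcZ, show 2 * p + 3 + Z + 1 = 2 * p + 4 + Z from by omega] at hf
    rcases kA_c_inv w11 _ _ hf with ⟨i', hi', hval⟩ | ⟨_, h⟩
    · exfalso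
      have hv' : (i' : ℕ) = Z - 1 + 1 := hval
      have := i'.isLt
      omega
    · exact h
  intro r hr
  by_cases e0 : r = 0
  · subst e0; rw [kSeg_zero]; exact h0
  by_cases e1 : r ≤ p
  · obtain ⟨i, rfl⟩ : ∃ i, r = i + 1 := ⟨r - 1, by omega⟩
    rw [kSeg_a' x y (i + 1) i (by omega) rfl]
    exact ha i (by omega)
  by_cases e2 : r = p + 1
  · subst e2; rw [kSeg_v1]; exact hv1
  by_cases e3 : r = p + 2
  · subst e3; rw [kSeg_v2]; exact hv2
  by_cases e4 : r ≤ 2 * p + 2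
  · obtain ⟨j, rfl⟩ : ∃ j, r = p + 3 + j := ⟨r - p - 3, by omega⟩
    rw [kSeg_b' x y (p + 3 + j) j (by omega) rfl]
    exact hb j (by omega)
  by_cases e5 : r = 2 * p + 3
  · subst e5; rw [kSeg_two]; exact htwo
  by_cases e6 : r ≤ 2 * p + 3 + Z
  · obtain ⟨i, rfl⟩ : ∃ i, r = 2 * p + 4 + i := ⟨r - (2 * p + 4), by omega⟩
    rw [kSeg_c' x y (2 * p + 4 + i) i (by omega) rfl]
    exact hc i (by omega)
  · have : r = 2 * p + 4 + Z := by omega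
    subst this
    rw [kSeg_three x y _ le_rfl]
    exact hthree
end
section
variable {n p Z m : ℕ}

lemma kSmallW_le (w11 : Fin n → Fin n → ℕ) (wa wb : Fin n → Fin p → Fin m → ℕ)
    (wu : Fin p → Fin m → Fin p → Fin m → ℕ) (x y : Fin n) (f : Fin p → Fin m) :
    kSmallW wu f ≤ kCliqueW w11 wa wb wu x y f :=
  Nat.le_add_left _ _

lemma kpart2 (hp : 0 < p) (hZ : 0 < Z)
    (w11 : Fin n → Fin n → ℕ) (wa wb : Fin n → Fin p → Fin m → ℕ)
    (wu : Fin p → Fin m → Fin p → Fin m → ℕ) (e : Fin (m ^ p) ≃ (Fin p → Fin m))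
    (hbound : ∀ x y f, kCliqueW w11 wa wb wu x y f < 2 ^ Z)
    (x y : Fin n) (f : Fin p → Fin m) :
    ∃ u : ℕ → KState n p Z, u 0 = .start ∧
      kCost w11 wa wb wu e u = ((kCliqueW w11 wa wb wu x y f : ℕ) : ℝ≥0∞) := by
  set j : ℕ := (e.symm f).val with hjdef
  have hj : j < m ^ p := (e.symm f).isLt
  have hef : e ⟨j, hj⟩ = f := by
    rw [show (⟨j, hj⟩ : Fin (m ^ p)) = e.symm f from Fin.ext rfl]
    exact e.apply_symm_apply f
  refine ⟨fun t =>
    if t ≤ j * (Z + 2 * p + 4) then .start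
    else if t < j * (Z + 2 * p + 4) + (Z + 2 * p + 4) then
      kSeg p Z x y (t - j * (Z + 2 * p + 4))
    else .three, by simp, ?_⟩
  rw [← hef]
  refine cost_eval hp hZ w11 wa wb wu e x y j hj ?_ _ ?_ ?_ ?_
  · rw [hef]
    exact lt_of_le_of_lt (kSmallW_le w11 wa wb wu x y f) (hbound x y f)
  · intro t ht
    simp [ht]
  · intro r hr
    rcases Nat.eq_zero_or_pos r with rfl | hrpos
    · simp [kSeg_zero]
    rcases Nat.lt_or_ge r (Z + 2 * p + 4) with hrL | hrL
    · rw [if_neg (by omega), if_pos (by omega), Nat.add_sub_cancel_left]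
    · have hrL' : r = Z + 2 * p + 4 := by omega
      subst hrL'
      rw [if_neg (by omega), if_neg (by omega), kSeg_three x y _ (by omega)]
  · intro t ht1 _
    rw [if_neg (by omega), if_neg (by omega)]

lemma kpart3 (hp : 0 < p) (hZ : 0 < Z)
    (w11 : Fin n → Fin n → ℕ) (wa wb : Fin n → Fin p → Fin m → ℕ)
    (wu : Fin p → Fin m → Fin p → Fin m → ℕ) (e : Fin (m ^ p) ≃ (Fin p → Fin m))
    (hbound : ∀ x y f, kCliqueW w11 wa wb wu x y f < 2 ^ Z)
    (u : ℕ → KState n p Z) (h0 : u 0 = .start)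
    (hfin : kCost w11 wa wb wu e u ≠ ⊤) :
    ∃ (x y : Fin n) (f : Fin p → Fin m),
      kCost w11 wa wb wu e u = ((kCliqueW w11 wa wb wu x y f : ℕ) : ℝ≥0∞) := by
  have hterm : ∀ t, t ≤ m ^ p * (Z + 2 * p + 4) →
      kA w11 (u t) (u (t + 1)) ≠ ⊤ ∧ kB wa wb (u (t + 1)) (kObs Z wu e t) ≠ ⊤ := by
    intro t ht
    have hsum : kA w11 (u t) (u (t + 1)) + kB wa wb (u (t + 1)) (kObs Z wu e t) ≠ ⊤ := by
      intro habs
      apply hfin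
      unfold kCost
      rw [ENNReal.sum_eq_top]
      exact ⟨t, Finset.mem_range.mpr (by omega), habs⟩
    exact ⟨fun h => hsum (by rw [h, top_add]), fun h => hsum (by rw [h, add_top])⟩
  have hmp : 0 < m ^ p := by
    by_contra hc
    have hmz : m ^ p * (Z + 2 * p + 4) = 0 := by
      have : m ^ p = 0 := by omega
      rw [this, Nat.zero_mul]
    have h1 := (hterm 0 (by omega)).1
    have h2 := (hterm 0 (by omega)).2
    rw [kObs_botF wu e 0 (by omega)] at h2
    have h3 := kB_botF_inv wa wb _ h2
    rw [h0, h3] at h1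
    exact h1 rfl
  have hN1 : u (m ^ p * (Z + 2 * p + 4) + 1) = .three := by
    have h2 := (hterm (m ^ p * (Z + 2 * p + 4)) le_rfl).2
    rw [kObs_botF wu e _ le_rfl] at h2
    exact kB_botF_inv wa wb _ h2
  have hbd : ∀ j, 1 ≤ j → j ≤ m ^ p →
      u (j * (Z + 2 * p + 4)) = .start ∨ u (j * (Z + 2 * p + 4)) = .three := by
    intro j h1 h2
    obtain ⟨j', rfl⟩ : ∃ j', j = j' + 1 := ⟨j - 1, by omega⟩
    have hsplit : (j' + 1) * (Z + 2 * p + 4)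
        = j' * (Z + 2 * p + 4) + (Z + 2 * p + 3) + 1 := by ring
    have hj' : j' < m ^ p := by omega
    have hb := (hterm (j' * (Z + 2 * p + 4) + (Z + 2 * p + 3)) ?_).2
    · rw [kObs_eq wu e j' (Z + 2 * p + 3) hj' (by omega)] at hb
      rw [kBlock_bot wu (e ⟨j', hj'⟩) _ (by omega)] at hb
      have := kB_bot_inv wa wb _ hb
      rwa [show j' * (Z + 2 * p + 4) + (Z + 2 * p + 3) + 1 = (j' + 1) * (Z + 2 * p + 4)
        from hsplit.symm] at this
    · have hmul : (j' + 1) * (Z + 2 * p + 4) ≤ m ^ p * (Z + 2 * p + 4) :=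
        Nat.mul_le_mul_right _ (by omega)
      omega
  have hNbd : u (m ^ p * (Z + 2 * p + 4)) = .three := by
    rcases hbd (m ^ p) hmp le_rfl with hs | h3
    · exfalso
      have h1 := (hterm (m ^ p * (Z + 2 * p + 4)) le_rfl).1
      rw [hs, hN1] at h1
      exact h1 rfl
    · exact h3
  have hex : ∃ j, u (j * (Z + 2 * p + 4)) = .three := ⟨m ^ p, hNbd⟩
  classical
  obtain ⟨j0, hj0spec, hj0min, hj0le⟩ :
      ∃ j0, u (j0 * (Z + 2 * p + 4)) = .three ∧
        (∀ k, k < j0 → u (k * (Z + 2 * p + 4)) ≠ .three) ∧ j0 ≤ m ^ p :=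
    ⟨Nat.find hex, Nat.find_spec hex, fun k hk => Nat.find_min hex hk,
      Nat.find_min' hex hNbd⟩
  have hj0pos : 1 ≤ j0 := by
    by_contra hc
    have : j0 = 0 := by omega
    rw [this, Nat.zero_mul, h0] at hj0spec
    exact absurd hj0spec (by simp)
  have hmulmono : j0 * (Z + 2 * p + 4) ≤ m ^ p * (Z + 2 * p + 4) :=
    Nat.mul_le_mul_right _ hj0le
  have hsub1 : (j0 - 1) * (Z + 2 * p + 4) + (Z + 2 * p + 4) = j0 * (Z + 2 * p + 4) := by
    calc (j0 - 1) * (Z + 2 * p + 4) + (Z + 2 * p + 4)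
        = ((j0 - 1) + 1) * (Z + 2 * p + 4) := by ring
      _ = j0 * (Z + 2 * p + 4) := by rw [show j0 - 1 + 1 = j0 from by omega]
  have hLle : Z + 2 * p + 4 ≤ j0 * (Z + 2 * p + 4) := by omega
  have hprev : u ((j0 - 1) * (Z + 2 * p + 4)) = .start := by
    rcases Nat.eq_zero_or_pos (j0 - 1) with hz | hpos
    · rw [hz, Nat.zero_mul]; exact h0
    · rcases hbd (j0 - 1) hpos (by omega) with hs | h3
      · exact hs
      · exact absurd h3 (hj0min (j0 - 1) (by omega))
  obtain ⟨s, hsle, hs_start, hs_greatest, hslb⟩ :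
      ∃ s, s ≤ j0 * (Z + 2 * p + 4) - 1 ∧ u s = .start ∧
        (∀ t, s < t → t ≤ j0 * (Z + 2 * p + 4) - 1 → u t ≠ .start) ∧
        (j0 - 1) * (Z + 2 * p + 4) ≤ s :=
    ⟨Nat.findGreatest (fun t => u t = .start) (j0 * (Z + 2 * p + 4) - 1),
      Nat.findGreatest_le (P := fun t => u t = KState.start) _,
      Nat.findGreatest_spec (P := fun t => u t = KState.start)
        (m := (j0 - 1) * (Z + 2 * p + 4)) (n := j0 * (Z + 2 * p + 4) - 1) (by omega) hprev,
      fun t h1 h2 => Nat.findGreatest_is_greatest (P := fun t => u t = KState.start) h1 h2,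
      Nat.le_findGreatest (P := fun t => u t = KState.start)
        (n := j0 * (Z + 2 * p + 4) - 1) (by omega) hprev⟩
  have hs1 : u (s + 1) ≠ .start := by
    rcases Nat.lt_or_ge (s + 1) (j0 * (Z + 2 * p + 4)) with hlt | hge
    · exact hs_greatest (s + 1) (by omega) (by omega)
    · have : s + 1 = j0 * (Z + 2 * p + 4) := by omega
      rw [this, hj0spec]
      simp
  -- show the chain fits: s + L ≤ j0 * L
  have hfit : s + (Z + 2 * p + 4) ≤ j0 * (Z + 2 * p + 4) := by
    by_contra hcon
    push_neg at hcon
    have hrstar : 1 ≤ j0 * (Z + 2 * p + 4) - s ∧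
        j0 * (Z + 2 * p + 4) - s < Z + 2 * p + 4 := by omega
    have hph : ∀ r, 1 ≤ r → r ≤ j0 * (Z + 2 * p + 4) - s →
        kPhase p Z (u (s + r)) = r := by
      intro r
      induction r with
      | zero => omega
      | succ r ih =>
        intro _ h2
        rcases Nat.eq_zero_or_pos r with rfl | hrpos
        · show kPhase p Z (u (s + 1)) = 1
          have hf := (hterm s (by omega)).1
          rw [hs_start] at hf
          rcases kA_start_inv w11 _ hf with hst | ⟨x, i, hx, hi⟩
          · exact absurd hst hs1
          · rw [hx]
            simp [kPhase, hi]
        · show kPhase p Z (u (s + r + 1)) = r + 1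
          have hr' := ih (by omega) (by omega)
          have hnstart : u (s + r) ≠ .start := by
            intro hst
            rw [hst, kPhase_start] at hr'
            omega
          have hnthree : u (s + r) ≠ .three := by
            intro hst
            rw [hst, kPhase_three] at hr'
            omega
          have hf := (hterm (s + r) (by omega)).1
          rw [kPhase_step w11 _ _ hf hnstart hnthree, hr']
    have hlast := hph (j0 * (Z + 2 * p + 4) - s) hrstar.1 le_rfl
    rw [show s + (j0 * (Z + 2 * p + 4) - s) = j0 * (Z + 2 * p + 4) by omega,
      hj0spec, kPhase_three] at hlast
    omega
  have hsval : s = (j0 - 1) * (Z + 2 * p + 4) := by omega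
  have hfinA : ∀ r, r < Z + 2 * p + 4 → kA w11 (u (s + r)) (u (s + r + 1)) ≠ ⊤ :=
    fun r hr => (hterm (s + r) (by omega)).1
  obtain ⟨x, y, hchain⟩ := chain_exists hp hZ w11 u s hfinA hs_start hs1
  have hbefore : ∀ t, t ≤ s → u t = .start := by
    have haux : ∀ d, d ≤ s → u (s - d) = .start := by
      intro d
      induction d with
      | zero => intro _; exact hs_start
      | succ d ih =>
        intro hd
        have hprev' := ih (by omega)
        have hf := (hterm (s - (d + 1)) (by omega)).1
        rw [show s - (d + 1) + 1 = s - d by omega, hprev'] at hf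
        exact kA_to_start_inv w11 _ hf
    intro t ht
    have := haux (s - t) (by omega)
    rwa [show s - (s - t) = t by omega] at this
  have hafter : ∀ t, s + (Z + 2 * p + 4) ≤ t → t ≤ m ^ p * (Z + 2 * p + 4) + 1 →
      u t = .three := by
    have hbase : u (s + (Z + 2 * p + 4)) = .three := by
      rw [hchain (Z + 2 * p + 4) le_rfl]
      exact kSeg_three x y _ (by omega)
    have haux : ∀ d, s + (Z + 2 * p + 4) + d ≤ m ^ p * (Z + 2 * p + 4) + 1 →
        u (s + (Z + 2 * p + 4) + d) = .three := by
      intro d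
      induction d with
      | zero => intro _; exact hbase
      | succ d ih =>
        intro hd
        have hprev' := ih (by omega)
        have hf := (hterm (s + (Z + 2 * p + 4) + d) (by omega)).1
        rw [hprev'] at hf
        have := kA_three_inv w11 _ hf
        rwa [show s + (Z + 2 * p + 4) + d + 1 = s + (Z + 2 * p + 4) + (d + 1) from rfl]
          at this
    intro t ht1 ht2
    have := haux (t - (s + (Z + 2 * p + 4))) (by omega)
    rwa [show s + (Z + 2 * p + 4) + (t - (s + (Z + 2 * p + 4))) = t by omega] at this
  have hj : j0 - 1 < m ^ p := by omega
  refine ⟨x, y, e ⟨j0 - 1, hj⟩, ?_⟩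
  refine cost_eval hp hZ w11 wa wb wu e x y (j0 - 1) hj ?_ u ?_ ?_ ?_
  · exact lt_of_le_of_lt (kSmallW_le w11 wa wb wu x y _) (hbound x y _)
  · intro t ht
    exact hbefore t (by omega)
  · intro r hr
    rw [← hsval]
    exact hchain r hr
  · intro t ht1 ht2
    exact hafter t (by omega) ht2
end

/-- The Min-Weight k-Clique (k = p + 2) to Viterbi reduction: the minimum Viterbi cost
equals the minimum weight of a k-clique; every choice `(v₁, v₂, u_1, ..., u_p)` is
realized by a state sequence of exactly its clique weight; and every finite-cost state
sequence has cost equal to the weight of some such k-clique. -/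
theorem kclique_viterbi_reduction
    (n p Z m : ℕ) (hp : 0 < p) (hZ : 0 < Z)
    (w11 : Fin n → Fin n → ℕ)
    (wa wb : Fin n → Fin p → Fin m → ℕ)
    (wu : Fin p → Fin m → Fin p → Fin m → ℕ)
    (e : Fin (m ^ p) ≃ (Fin p → Fin m))
    (hbound : ∀ x y f, kCliqueW w11 wa wb wu x y f < 2 ^ Z) :
    ((⨅ (u : ℕ → KState n p Z) (_ : u 0 = .start), kCost w11 wa wb wu e u)
        = ⨅ (x : Fin n), ⨅ (y : Fin n), ⨅ (f : Fin p → Fin m),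
            ((kCliqueW w11 wa wb wu x y f : ℕ) : ℝ≥0∞)) ∧
    (∀ (x y : Fin n) (f : Fin p → Fin m),
        ∃ u : ℕ → KState n p Z, u 0 = .start ∧
          kCost w11 wa wb wu e u = ((kCliqueW w11 wa wb wu x y f : ℕ) : ℝ≥0∞)) ∧
    (∀ u : ℕ → KState n p Z, u 0 = .start → kCost w11 wa wb wu e u < ⊤ →
        ∃ (x y : Fin n) (f : Fin p → Fin m),
          kCost w11 wa wb wu e u = ((kCliqueW w11 wa wb wu x y f : ℕ) : ℝ≥0∞)) := by
  refine ⟨?_, kpart2 hp hZ w11 wa wb wu e hbound,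
    fun u h0 hlt => kpart3 hp hZ w11 wa wb wu e hbound u h0 hlt.ne⟩
  apply le_antisymm
  · refine le_iInf fun x => le_iInf fun y => le_iInf fun f => ?_
    obtain ⟨u, hu0, hcost⟩ := kpart2 hp hZ w11 wa wb wu e hbound x y f
    calc (⨅ (u : ℕ → KState n p Z) (_ : u 0 = .start), kCost w11 wa wb wu e u)
        ≤ kCost w11 wa wb wu e u := iInf₂_le u hu0
      _ = _ := hcost
  · refine le_iInf fun u => le_iInf fun hu0 => ?_
    rcases eq_or_ne (kCost w11 wa wb wu e u) ⊤ with htop | hne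
    · rw [htop]; exact le_top
    · obtain ⟨x, y, f, hco⟩ := kpart3 hp hZ w11 wa wb wu e hbound u hu0 hne
      rw [hco]
      exact (iInf_le _ x).trans ((iInf_le _ y).trans (iInf_le _ f))
end

section
/- In the Shortest Walk reduction graph G', every walk of length T = m + 4 from node 1 to node 2 has total weight equal to w(u,v_1) + w(v_1,v_2) + w(v_2,u) − C for some triangle (u, v_1, v_2) ∈ U × V_1 × V_2 of the original graph G, and conversely every such triangle gives rise to such a walk; hence the minimum weight of a length-T walk from 1 to 2 equals (minimum triangle weight of G) − C. -/
/-- Vertices of the Shortest Walk reduction graph `G'`: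
node 1, node 2, `V₁`, `V₂`, the path `P` through `U`, and the copy path `P'` through `U'`. -/
inductive WalkState (n n' m : ℕ) where
  | one
  | two
  | v1 (v : Fin n)
  | v2 (v : Fin n')
  | pu (u : Fin m)        -- U, on the zero-weight path P starting at node 1
  | pu' (u : Fin m)       -- U', on the path P' ending at node 2
  deriving DecidableEq

/-- Edge-weight matrix of `G'` (`⊤` for non-edges); the final edge of `P'` into node 2
has weight `-C`. -/
noncomputable def walkA {n n' m : ℕ}
    (wu1 : Fin m → Fin n → ℝ)      -- weights of edges between U and V₁
    (w12 : Fin n → Fin n' → ℝ)     -- weights of edges between V₁ and V₂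
    (w2u : Fin n' → Fin m → ℝ)     -- weights of edges between V₂ and U
    (C : ℝ) : WalkState n n' m → WalkState n n' m → EReal
  | .one, .pu u => if (u : ℕ) = 0 then 0 else ⊤
  | .pu u, .pu u' => if (u' : ℕ) = (u : ℕ) + 1 then 0 else ⊤
  | .pu u, .v1 v => (wu1 u v : EReal)
  | .v1 v, .v2 v' => (w12 v v' : EReal)
  | .v2 v, .pu' u => (w2u v u : EReal)
  | .pu' u, .pu' u' => if (u' : ℕ) = (u : ℕ) + 1 then 0 else ⊤
  | .pu' u, .two => if (u : ℕ) = m - 1 then ((-C : ℝ) : EReal) else ⊤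
  | _, _ => ⊤

/-!
A walk of finite weight from node 1 to node 2 is forced: it runs along `P` to some `pu a`,
crosses `V₁` and `V₂` to some `pu' b`, and runs along `P'` to node 2. Its length `k`
satisfies `k + b = m + 4 + a`, so `k = m + 4` forces `b = a` and the weight is that of the triangle
`(a, x, y)` minus `C`. This is proved backwards from node 2, by describing for each kind of
vertex all (length, weight) pairs of finite-weight walks from it to node 2.
-/

open Finset

section FiniteWalk

variable {σ : Type*} (A : σ → σ → EReal)

def HasFiniteWalk (s z : σ) (k : ℕ) (w : EReal) : Prop :=
  ∃ u : ℕ → σ, u 0 = s ∧ u k = z ∧ ∑ t ∈ range k, A (u t) (u (t + 1)) = w ∧ w ≠ ⊤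

variable {A}

theorem hasFiniteWalk_zero_iff {s z : σ} {w : EReal} :
    HasFiniteWalk A s z 0 w ↔ s = z ∧ w = 0 := by
  constructor
  · rintro ⟨u, rfl, rfl, rfl, -⟩
    simp
  · rintro ⟨rfl, rfl⟩
    exact ⟨fun _ => s, rfl, rfl, by simp, EReal.zero_ne_top⟩

/-- `hA` is needed: in `EReal` a non-edge is hidden by an edge of weight `⊥`, as `⊤ + ⊥ = ⊥`. -/
theorem hasFiniteWalk_succ_iff (hA : ∀ s s', A s s' ≠ ⊥) {s z : σ} {k : ℕ} {w : EReal} :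
    HasFiniteWalk A s z (k + 1) w ↔
      ∃ s' w', A s s' ≠ ⊤ ∧ HasFiniteWalk A s' z k w' ∧ w = A s s' + w' := by
  constructor
  · rintro ⟨u, rfl, hz, rfl, hw⟩
    have htail : ∑ t ∈ range k, A (u (t + 1)) (u (t + 1 + 1)) ≠ ⊥ :=
      sum_induction _ (· ≠ ⊥) (fun _ _ ha hb => EReal.add_ne_bot_iff.2 ⟨ha, hb⟩)
        EReal.zero_ne_bot (fun _ _ => hA _ _)
    rw [sum_range_succ', add_comm] at hw ⊢
    obtain ⟨hhead, htail'⟩ := (EReal.add_ne_top_iff_ne_top₂ (hA _ _) htail).1 hw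
    exact ⟨u 1, _, hhead, ⟨fun t => u (t + 1), rfl, hz, rfl, htail'⟩, rfl⟩
  · rintro ⟨s', w', hhead, ⟨u, rfl, hz, rfl, htail⟩, rfl⟩
    refine ⟨fun | 0 => s | t + 1 => u t, rfl, hz, ?_, EReal.add_ne_top hhead htail⟩
    rw [sum_range_succ', add_comm]

end FiniteWalk

section ReductionGraph

variable {n n' m : ℕ} (wu1 : Fin m → Fin n → ℝ) (w12 : Fin n → Fin n' → ℝ)
  (w2u : Fin n' → Fin m → ℝ) (C : ℝ)

theorem walkA_ne_bot (s s' : WalkState n n' m) : walkA wu1 w12 w2u C s s' ≠ ⊥ := by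
  unfold walkA
  split <;> (try split) <;> simp

theorem hasFiniteWalk_two_iff {k : ℕ} {w : EReal} :
    HasFiniteWalk (walkA wu1 w12 w2u C) .two .two k w ↔ k = 0 ∧ w = 0 := by
  cases k with
  | zero => simp [hasFiniteWalk_zero_iff]
  | succ k => simp [hasFiniteWalk_succ_iff (walkA_ne_bot wu1 w12 w2u C), walkA]

theorem hasFiniteWalk_pu'_iff {k : ℕ} {w : EReal} (b : Fin m) :
    HasFiniteWalk (walkA wu1 w12 w2u C) (.pu' b) .two k w ↔
      b + k = m ∧ w = ((-C : ℝ) : EReal) := by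
  induction k generalizing b w with
  | zero => simp [hasFiniteWalk_zero_iff, b.isLt.ne]
  | succ k ih =>
    rw [hasFiniteWalk_succ_iff (walkA_ne_bot wu1 w12 w2u C)]
    constructor
    · rintro ⟨s', w', hs', hw', rfl⟩
      cases s' <;> simp [walkA] at hs' ⊢
      case two =>
        obtain ⟨rfl, rfl⟩ := (hasFiniteWalk_two_iff wu1 w12 w2u C).1 hw'
        simp only [hs', if_true, add_zero, and_true]
        omega
      case pu' b' =>
        obtain ⟨hk, rfl⟩ := (ih b').1 hw'
        simp only [hs', if_true, zero_add, EReal.coe_neg, and_true]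
        omega
    · rintro ⟨hk, rfl⟩
      rcases k with _ | k
      · refine ⟨.two, 0, ?_, (hasFiniteWalk_two_iff wu1 w12 w2u C).2 ⟨rfl, rfl⟩, ?_⟩ <;>
          simp [walkA, show (b : ℕ) = m - 1 by omega]
      · refine ⟨.pu' ⟨b + 1, by omega⟩, _, ?_, (ih _).2 ⟨by simp only; omega, rfl⟩, ?_⟩ <;>
          simp [walkA]

theorem hasFiniteWalk_v2_iff {k : ℕ} {w : EReal} (y : Fin n') :
    HasFiniteWalk (walkA wu1 w12 w2u C) (.v2 y) .two k w ↔
      ∃ b : Fin m, b + k = m + 1 ∧ w = ((w2u y b - C : ℝ) : EReal) := by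
  cases k with
  | zero =>
    simp only [hasFiniteWalk_zero_iff, reduceCtorEq, false_and, false_iff]
    rintro ⟨b, hb, -⟩
    omega
  | succ k =>
    rw [hasFiniteWalk_succ_iff (walkA_ne_bot wu1 w12 w2u C)]
    constructor
    · rintro ⟨s', w', hs', hw', rfl⟩
      cases s' <;> simp [walkA] at hs'
      case pu' b =>
        obtain ⟨hk, rfl⟩ := (hasFiniteWalk_pu'_iff wu1 w12 w2u C b).1 hw'
        refine ⟨b, by omega, ?_⟩
        simp only [walkA]
        rw [← EReal.coe_add, sub_eq_add_neg]
    · rintro ⟨b, hk, rfl⟩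
      refine ⟨.pu' b, _, ?_, (hasFiniteWalk_pu'_iff wu1 w12 w2u C b).2 ⟨by omega, rfl⟩, ?_⟩
      · simp [walkA]
      · simp only [walkA]
        rw [← EReal.coe_add, sub_eq_add_neg]

theorem hasFiniteWalk_v1_iff {k : ℕ} {w : EReal} (x : Fin n) :
    HasFiniteWalk (walkA wu1 w12 w2u C) (.v1 x) .two k w ↔
      ∃ (y : Fin n') (b : Fin m), b + k = m + 2 ∧ w = ((w12 x y + w2u y b - C : ℝ) : EReal) := by
  cases k with
  | zero =>
    simp only [hasFiniteWalk_zero_iff, reduceCtorEq, false_and, false_iff]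
    rintro ⟨y, b, hb, -⟩
    omega
  | succ k =>
    rw [hasFiniteWalk_succ_iff (walkA_ne_bot wu1 w12 w2u C)]
    constructor
    · rintro ⟨s', w', hs', hw', rfl⟩
      cases s' <;> simp [walkA] at hs'
      case v2 y =>
        obtain ⟨b, hk, rfl⟩ := (hasFiniteWalk_v2_iff wu1 w12 w2u C y).1 hw'
        refine ⟨y, b, by omega, ?_⟩
        simp only [walkA]
        rw [← EReal.coe_add, add_sub_assoc]
    · rintro ⟨y, b, hk, rfl⟩
      refine ⟨.v2 y, _, ?_, (hasFiniteWalk_v2_iff wu1 w12 w2u C y).2 ⟨b, by omega, rfl⟩, ?_⟩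
      · simp [walkA]
      · simp only [walkA]
        rw [← EReal.coe_add, add_sub_assoc]

theorem hasFiniteWalk_pu_iff {k : ℕ} {w : EReal} (a : Fin m) :
    HasFiniteWalk (walkA wu1 w12 w2u C) (.pu a) .two k w ↔
      ∃ (a' : Fin m) (x : Fin n) (y : Fin n') (b : Fin m), (a : ℕ) ≤ a' ∧
        a + b + k = a' + m + 3 ∧ w = ((wu1 a' x + w12 x y + w2u y b - C : ℝ) : EReal) := by
  induction k generalizing a w with
  | zero =>
    simp only [hasFiniteWalk_zero_iff, reduceCtorEq, false_and, false_iff]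
    rintro ⟨a', x, y, b, ha, hb, -⟩
    omega
  | succ k ih =>
    rw [hasFiniteWalk_succ_iff (walkA_ne_bot wu1 w12 w2u C)]
    constructor
    · rintro ⟨s', w', hs', hw', rfl⟩
      cases s' <;> simp [walkA] at hs'
      case v1 x =>
        obtain ⟨y, b, hk, rfl⟩ := (hasFiniteWalk_v1_iff wu1 w12 w2u C x).1 hw'
        refine ⟨a, x, y, b, le_rfl, by omega, ?_⟩
        simp only [walkA]
        rw [← EReal.coe_add]
        congr 1
        ring
      case pu a₁ =>
        obtain ⟨a', x, y, b, ha, hk, rfl⟩ := (ih a₁).1 hw'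
        exact ⟨a', x, y, b, by omega, by omega, by simp [walkA, hs']⟩
    · rintro ⟨a', x, y, b, ha, hk, rfl⟩
      rcases ha.eq_or_lt with ha | ha
      · obtain rfl := Fin.ext ha
        refine ⟨.v1 x, _, ?_, (hasFiniteWalk_v1_iff wu1 w12 w2u C x).2 ⟨y, b, by omega, rfl⟩, ?_⟩
        · simp [walkA]
        · simp only [walkA]
          rw [← EReal.coe_add]
          congr 1
          ring
      · refine ⟨.pu ⟨a + 1, by omega⟩, _, ?_, (ih _).2 ⟨a', x, y, b, ?_, ?_, rfl⟩, ?_⟩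
        · simp [walkA]
        · show (a : ℕ) + 1 ≤ a'
          omega
        · show (a : ℕ) + 1 + b + k = a' + m + 3
          omega
        · simp [walkA]

theorem hasFiniteWalk_one_iff {k : ℕ} {w : EReal} :
    HasFiniteWalk (walkA wu1 w12 w2u C) .one .two k w ↔
      ∃ (a : Fin m) (x : Fin n) (y : Fin n') (b : Fin m), b + k = a + m + 4 ∧
        w = ((wu1 a x + w12 x y + w2u y b - C : ℝ) : EReal) := by
  cases k with
  | zero =>
    simp only [hasFiniteWalk_zero_iff, reduceCtorEq, false_and, false_iff]
    rintro ⟨a, x, y, b, hb, -⟩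
    omega
  | succ k =>
    rw [hasFiniteWalk_succ_iff (walkA_ne_bot wu1 w12 w2u C)]
    constructor
    · rintro ⟨s', w', hs', hw', rfl⟩
      cases s' <;> simp [walkA] at hs'
      case pu a₀ =>
        obtain ⟨a, x, y, b, -, hk, rfl⟩ := (hasFiniteWalk_pu_iff wu1 w12 w2u C a₀).1 hw'
        exact ⟨a, x, y, b, by omega, by simp [walkA, hs']⟩
    · rintro ⟨a, x, y, b, hk, rfl⟩
      refine ⟨.pu ⟨0, a.pos⟩, _, ?_, (hasFiniteWalk_pu_iff wu1 w12 w2u C _).2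
        ⟨a, x, y, b, Nat.zero_le _, by simp only; omega, rfl⟩, ?_⟩ <;> simp [walkA]

theorem walk_weight_eq_triangle (u : ℕ → WalkState n n' m) (h0 : u 0 = .one) (hT : u (m + 4) = .two)
    (hfin : ∑ t ∈ range (m + 4), walkA wu1 w12 w2u C (u t) (u (t + 1)) ≠ ⊤) :
    ∃ (a : Fin m) (x : Fin n) (y : Fin n'),
      ∑ t ∈ range (m + 4), walkA wu1 w12 w2u C (u t) (u (t + 1))
        = ((wu1 a x + w12 x y + w2u y a - C : ℝ) : EReal) := by
  obtain ⟨a, x, y, b, hlen, hw⟩ :=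
    (hasFiniteWalk_one_iff wu1 w12 w2u C).1 ⟨u, h0, hT, rfl, hfin⟩
  obtain rfl : b = a := Fin.ext (by omega)
  exact ⟨b, x, y, hw⟩

theorem exists_walk_weight_eq_triangle (a : Fin m) (x : Fin n) (y : Fin n') :
    ∃ u : ℕ → WalkState n n' m, u 0 = .one ∧ u (m + 4) = .two ∧
      ∑ t ∈ range (m + 4), walkA wu1 w12 w2u C (u t) (u (t + 1))
        = ((wu1 a x + w12 x y + w2u y a - C : ℝ) : EReal) := by
  obtain ⟨u, h0, hT, hw, -⟩ :=
    (hasFiniteWalk_one_iff (k := m + 4) wu1 w12 w2u C).2 ⟨a, x, y, a, by omega, rfl⟩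
  exact ⟨u, h0, hT, hw⟩

end ReductionGraph

theorem shortest_walk_reduction_general
    (n n' m : ℕ)
    (wu1 : Fin m → Fin n → ℝ) (w12 : Fin n → Fin n' → ℝ) (w2u : Fin n' → Fin m → ℝ)
    (C : ℝ) :
    (∀ u : ℕ → WalkState n n' m, u 0 = .one → u (m + 4) = .two →
        (∑ t ∈ Finset.range (m + 4), walkA wu1 w12 w2u C (u t) (u (t + 1))) ≠ ⊤ →
        ∃ (uu : Fin m) (x : Fin n) (y : Fin n'),
          (∑ t ∈ Finset.range (m + 4), walkA wu1 w12 w2u C (u t) (u (t + 1)))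
            = ((wu1 uu x + w12 x y + w2u y uu - C : ℝ) : EReal)) ∧
    (∀ (uu : Fin m) (x : Fin n) (y : Fin n'),
        ∃ u : ℕ → WalkState n n' m, u 0 = .one ∧ u (m + 4) = .two ∧
          (∑ t ∈ Finset.range (m + 4), walkA wu1 w12 w2u C (u t) (u (t + 1)))
            = ((wu1 uu x + w12 x y + w2u y uu - C : ℝ) : EReal)) ∧
    ((⨅ (u : ℕ → WalkState n n' m) (_ : u 0 = .one ∧ u (m + 4) = .two),
        ∑ t ∈ Finset.range (m + 4), walkA wu1 w12 w2u C (u t) (u (t + 1)))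
      = ⨅ (uu : Fin m), ⨅ (x : Fin n), ⨅ (y : Fin n'),
          ((wu1 uu x + w12 x y + w2u y uu - C : ℝ) : EReal)) := by
  refine ⟨walk_weight_eq_triangle wu1 w12 w2u C, exists_walk_weight_eq_triangle wu1 w12 w2u C,
    le_antisymm ?_ ?_⟩
  · refine le_iInf₂ fun a x => le_iInf fun y => ?_
    obtain ⟨u, h0, hT, hw⟩ := exists_walk_weight_eq_triangle wu1 w12 w2u C a x y
    exact hw ▸ iInf₂_le u ⟨h0, hT⟩
  · refine le_iInf₂ fun u ⟨h0, hT⟩ => ?_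
    by_cases hfin : ∑ t ∈ range (m + 4), walkA wu1 w12 w2u C (u t) (u (t + 1)) = ⊤
    · exact hfin ▸ le_top
    · obtain ⟨a, x, y, hw⟩ := walk_weight_eq_triangle wu1 w12 w2u C u h0 hT hfin
      exact hw ▸ iInf₂_le_of_le a x (iInf_le _ y)

/-- In the Shortest Walk reduction, every finite-weight walk of length `T = m + 4` from
node 1 to node 2 has weight `w(u,v₁) + w(v₁,v₂) + w(v₂,u) - C` for some triangle
`(u, v₁, v₂) ∈ U × V₁ × V₂`, every triangle gives such a walk, and hence the minimum
weight of such a walk equals the minimum triangle weight minus `C`. -/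
theorem shortest_walk_reduction
    (n n' m : ℕ) (hm : 0 < m)
    (wu1 : Fin m → Fin n → ℝ) (w12 : Fin n → Fin n' → ℝ) (w2u : Fin n' → Fin m → ℝ)
    (hwu1 : ∀ u v, 0 < wu1 u v) (hw12 : ∀ v v', 0 < w12 v v')
    (hw2u : ∀ v u, 0 < w2u v u) (C : ℝ) :
    (∀ u : ℕ → WalkState n n' m, u 0 = .one → u (m + 4) = .two →
        (∑ t ∈ Finset.range (m + 4), walkA wu1 w12 w2u C (u t) (u (t + 1))) ≠ ⊤ →
        ∃ (uu : Fin m) (x : Fin n) (y : Fin n'),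
          (∑ t ∈ Finset.range (m + 4), walkA wu1 w12 w2u C (u t) (u (t + 1)))
            = ((wu1 uu x + w12 x y + w2u y uu - C : ℝ) : EReal)) ∧
    (∀ (uu : Fin m) (x : Fin n) (y : Fin n'),
        ∃ u : ℕ → WalkState n n' m, u 0 = .one ∧ u (m + 4) = .two ∧
          (∑ t ∈ Finset.range (m + 4), walkA wu1 w12 w2u C (u t) (u (t + 1)))
            = ((wu1 uu x + w12 x y + w2u y uu - C : ℝ) : EReal)) ∧
    ((⨅ (u : ℕ → WalkState n n' m) (_ : u 0 = .one ∧ u (m + 4) = .two),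
        ∑ t ∈ Finset.range (m + 4), walkA wu1 w12 w2u C (u t) (u (t + 1)))
      = ⨅ (uu : Fin m), ⨅ (x : Fin n), ⨅ (y : Fin n'),
          ((wu1 uu x + w12 x y + w2u y uu - C : ℝ) : EReal)) :=
  shortest_walk_reduction_general n n' m wu1 w12 w2u C
end

section
/- If a bucketed computation fills the entries of a vector r in rounds k = 1, ..., p, where in round k entry r_j is set to min_{i ∈ S_k, A(j,i)=0} v_i whenever r_j is still undefined and row j of A has a zero in S_k, then after all p rounds every defined entry r_j equals (A ⊕ v)_j, and r_j is undefined exactly when row j of A is identically ∞. -/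
open scoped Classical

/-- Full correctness of the bucketed (min,+) matrix-vector algorithm: starting from an
everywhere-undefined vector and, in rounds `k = 1, ..., p`, filling each still-undefined
entry `r_j` with `min {v_i : i ∈ S_k, A(j,i) = 0}` whenever row `j` has a zero in `S_k`,
the final vector satisfies: `r_j` is undefined iff row `j` of `A` is identically `∞`, and
every defined entry equals `(A ⊕ v)_j`. -/
theorem bucketed_minPlus_matVec_correct
    (n p : ℕ) (A : Fin n → Fin n → EReal) (v : Fin n → ℝ)
    (hA : ∀ j i, A j i = 0 ∨ A j i = ⊤)
    (S : Fin p → Finset (Fin n))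
    (hdisj : ∀ k k', k ≠ k' → Disjoint (S k) (S k'))
    (hcover : ∀ i : Fin n, ∃ k, i ∈ S k)
    (hsorted : ∀ k k' : Fin p, k < k' → ∀ i ∈ S k, ∀ i' ∈ S k', v i ≤ v i')
    (r : ℕ → Fin n → Option ℝ)
    (hr0 : r 0 = fun _ => none)
    (hstep : ∀ (k : Fin p) (j : Fin n),
      r ((k : ℕ) + 1) j =
        match r (k : ℕ) j with
        | some x => some x
        | none =>
            if ∃ i ∈ S k, A j i = 0 then
              some (sInf {x : ℝ | ∃ i ∈ S k, A j i = 0 ∧ v i = x})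
            else none) :
    ∀ j : Fin n,
      (r p j = none ↔ ∀ i, A j i = ⊤) ∧
      (∀ x : ℝ, r p j = some x → (x : EReal) = ⨅ i, A j i + (v i : EReal)) := by
  intro j
  by_cases hz : ∃ i, A j i = 0
  · -- row j has a zero
    obtain ⟨i0, hi0⟩ := hz
    have hKne : ((Finset.univ : Finset (Fin p)).filter
        (fun k => ∃ i ∈ S k, A j i = 0)).Nonempty := by
      obtain ⟨k1, hk1⟩ := hcover i0
      exact ⟨k1, Finset.mem_filter.mpr ⟨Finset.mem_univ _, ⟨i0, hk1, hi0⟩⟩⟩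
    set K := (Finset.univ : Finset (Fin p)).filter (fun k => ∃ i ∈ S k, A j i = 0) with hK
    set k0 : Fin p := K.min' hKne with hk0
    have hk0mem : ∃ i ∈ S k0, A j i = 0 :=
      (Finset.mem_filter.mp (K.min'_mem hKne)).2
    have hk0min : ∀ k : Fin p, (∃ i ∈ S k, A j i = 0) → k0 ≤ k := fun k hk =>
      K.min'_le k (Finset.mem_filter.mpr ⟨Finset.mem_univ _, hk⟩)
    -- before round k0 the entry is none
    have hnone : ∀ m, m ≤ (k0 : ℕ) → r m j = none := by
      intro m hm
      induction m with
      | zero => rw [hr0]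
      | succ m ih =>
        have hmk : m < (k0 : ℕ) := hm
        have hmp : m < p := lt_trans hmk k0.isLt
        have hs := hstep ⟨m, hmp⟩ j
        simp only [Fin.val_mk] at hs
        rw [ih (le_of_lt hmk)] at hs
        have hnc : ¬ ∃ i ∈ S ⟨m, hmp⟩, A j i = 0 := by
          intro hc
          have := hk0min ⟨m, hmp⟩ hc
          exact absurd this (by simpa [Fin.le_def] using hmk)
        rw [hs]
        simp [hnc]
    set T : Set ℝ := {x : ℝ | ∃ i ∈ S k0, A j i = 0 ∧ v i = x} with hT
    have hval : r ((k0 : ℕ) + 1) j = some (sInf T) := by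
      have hs := hstep k0 j
      rw [hnone (k0 : ℕ) le_rfl] at hs
      rw [hs]
      simp [hk0mem, hT]
    have hstable : ∀ m, (k0 : ℕ) + 1 ≤ m → m ≤ p → r m j = some (sInf T) := by
      intro m hm1 hm2
      induction m with
      | zero => omega
      | succ m ih =>
        rcases Nat.lt_or_ge (k0 : ℕ) m with h | h
        · have hmp : m < p := hm2
          have hs := hstep ⟨m, hmp⟩ j
          simp only [Fin.val_mk] at hs
          rw [ih (by omega) (le_of_lt hmp)] at hs
          rw [hs]
        · have : m = (k0 : ℕ) := by omega
          rw [this]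
          exact hval
    have hrp : r p j = some (sInf T) :=
      hstable p (Nat.succ_le_of_lt k0.isLt) le_rfl
    -- facts about T
    have hTsub : T ⊆ Set.range v := by
      rintro x ⟨i, _, _, hvi⟩; exact ⟨i, hvi⟩
    have hTfin : T.Finite := (Set.finite_range v).subset hTsub
    obtain ⟨i1, hi1S, hi1A⟩ := hk0mem
    have hTne : T.Nonempty := ⟨v i1, i1, hi1S, hi1A, rfl⟩
    have hbdd : BddBelow T := hTfin.bddBelow
    obtain ⟨i2, hi2S, hi2A, hi2v⟩ : sInf T ∈ T := hTne.csInf_mem hTfin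
    have hvaleq : ((sInf T : ℝ) : EReal) = ⨅ i, A j i + (v i : EReal) := by
      apply le_antisymm
      · apply le_iInf
        intro i
        rcases hA j i with h | h
        · rw [h, zero_add, EReal.coe_le_coe_iff]
          obtain ⟨k, hk⟩ := hcover i
          have hk0le : k0 ≤ k := hk0min k ⟨i, hk, h⟩
          rcases eq_or_lt_of_le hk0le with heq | hlt
          · exact csInf_le hbdd ⟨i, heq ▸ hk, h, rfl⟩
          · calc sInf T = v i2 := hi2v.symm
              _ ≤ v i := hsorted k0 k hlt i2 hi2S i hk
        · rw [h]
          have : (⊤ : EReal) + (v i : EReal) = ⊤ := by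
            rw [EReal.top_add_of_ne_bot (by simp)]
          rw [this]; exact le_top
      · calc (⨅ i, A j i + (v i : EReal)) ≤ A j i2 + (v i2 : EReal) := iInf_le _ i2
          _ = ((sInf T : ℝ) : EReal) := by rw [hi2A, zero_add, hi2v]
    constructor
    · rw [hrp]
      constructor
      · intro h; exact absurd h (by simp)
      · intro h
        exact absurd hi0 (by rw [h i0]; simp)
    · intro x hx
      rw [hrp] at hx
      have : x = sInf T := by injection hx.symm
      rw [this]
      exact hvaleq
  · -- row j is all ⊤
    have hall : ∀ i, A j i = ⊤ := fun i =>
      (hA j i).resolve_left (fun h => hz ⟨i, h⟩)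
    have hnone : ∀ m, m ≤ p → r m j = none := by
      intro m hm
      induction m with
      | zero => rw [hr0]
      | succ m ih =>
        have hmp : m < p := hm
        have hs := hstep ⟨m, hmp⟩ j
        simp only [Fin.val_mk] at hs
        rw [ih (le_of_lt hmp)] at hs
        have hnc : ¬ ∃ i ∈ S ⟨m, hmp⟩, A j i = 0 := by
          rintro ⟨i, _, hi⟩
          rw [hall i] at hi
          exact absurd hi (by simp)
        rw [hs]
        simp [hnc]
    constructor
    · exact ⟨fun _ => hall, fun _ => hnone p le_rfl⟩
    · intro x hx
      rw [hnone p le_rfl] at hx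
      cases hx
end
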